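/- arXiv:1809.00441 — 6 statements merged into one kernel-verified Lean document; each statement's English description precedes it below -/
import Mathlib

section
/- Let T : [0,1] → [0,1] be a map satisfying T(x) = x + (2/log 2)·x²|log x| for all sufficiently small x > 0 (for instance the map equal to 0 at 0, to x + (2/log 2)x²|log x| on (0,1/2], and to 2x − 1 on (1/2,1]). Then for every k > 0 there exists a function f ∈ C^ω([0,1]), where ω is the concave modulus given by ω(h) = h(log(1/h^k) + 1) for h sufficiently small, such that f does not admit a continuous sub-action with respect to T. In particular, there exist locally Hölder continuous functions on [0,1] not admitting continuous sub-actions for T. -/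
open MeasureTheory Set Filter Topology Real

noncomputable section

/-- A `T`-invariant Borel probability measure concentrated on `[0,1]`. -/
def InvariantProb (T : ℝ → ℝ) (μ : Measure ℝ) : Prop :=
  IsProbabilityMeasure μ ∧ μ (Set.Icc 0 1) = 1 ∧ μ.map T = μ

/-- The maximum ergodic average `m(f,T)` over invariant probability measures on `[0,1]`. -/
noncomputable def ergMax (T f : ℝ → ℝ) : ℝ :=
  sSup {r : ℝ | ∃ μ : Measure ℝ, InvariantProb T μ ∧ r = ∫ x, f x ∂μ}

/-- `u` is a sub-action for `f` with respect to `T`. -/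
def IsSubaction (T f u : ℝ → ℝ) : Prop :=
  ∀ x ∈ Set.Icc (0:ℝ) 1, f x + u x - u (T x) ≤ ergMax T f

/-- `f` belongs to `C^ω([0,1])`: a multiple of `ω` is a modulus of continuity for `f`. -/
def MemCmod (ω f : ℝ → ℝ) : Prop :=
  ∃ C > (0:ℝ), ∀ x ∈ Set.Icc (0:ℝ) 1, ∀ y ∈ Set.Icc (0:ℝ) 1, |f x - f y| ≤ C * ω |x - y|

/-- A concave modulus of continuity. -/
def ConcaveModulus (ω : ℝ → ℝ) : Prop :=
  ContinuousOn ω (Set.Ici 0) ∧ MonotoneOn ω (Set.Ici 0) ∧ ω 0 = 0 ∧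
    (∀ x, 0 ≤ x → 0 ≤ ω x) ∧ ConcaveOn ℝ (Set.Ici 0) ω

/-- `V` is regularly varying at `0` with index `σ`. -/
def RegVary0 (V : ℝ → ℝ) (σ : ℝ) : Prop :=
  ∀ t > (0:ℝ), Tendsto (fun x => V (t * x) / V x) (𝓝[>] 0) (𝓝 (t ^ σ))

/-- The modulus of continuity `ω_{α,β}`: `h^α (-log h)^{-β}` for `0 < h < h₀`, constant
for `h ≥ h₀`, and vanishing at `0`. -/
noncomputable def omegaAB (α β h₀ : ℝ) : ℝ → ℝ := fun h =>
  if h ≤ 0 then 0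
  else if h < h₀ then h ^ α * (-Real.log h) ^ (-β)
  else h₀ ^ α * (-Real.log h₀) ^ (-β)

/-!
With `G x = cos (log x) / 2` and `S` the local form of `T`, the potential is the coboundary
`G ∘ S - G` near `0`, cut off at a point `z` where `G z = 1/2` and then ramped down by `2`.
It lies below `P ∘ T - P` for the bounded function `P = G (min x z)` (with `P 0 = -1/2`), so
`m(f,T) ≤ 0`. Since `S x - x ≈ x² log (1/x)`, the orbit of a point `a` with `G a = -1/2`
creeps to the right by steps of ratio at most `4`, so its first point beyond `p = e^{π/2} a`
lies in `(p, e^π p]`, where `G ≥ 0`. Along this orbit any sub-action gains at least `1/2`,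
while both ends can be taken arbitrarily close to `0`: no sub-action is continuous at `0`.
The regularity `h log (1/h)` of the potential comes from the cancellation in
`cos (log x + τ x) - cos (log x)` with `τ x ≈ x log (1/x)`.
-/

namespace Real

lemma negMulLog_add_le {x y : ℝ} (hx : 0 ≤ x) (hy : 0 ≤ y) :
    negMulLog (x + y) ≤ negMulLog x + negMulLog y := by
  rcases hx.eq_or_lt with rfl | hx
  · simp
  rcases hy.eq_or_lt with rfl | hy
  · simp
  have hlx : log x ≤ log (x + y) := log_le_log hx (by linarith)
  have hly : log y ≤ log (x + y) := log_le_log hy (by linarith)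
  simp only [negMulLog]
  nlinarith

lemma monotoneOn_negMulLog : MonotoneOn negMulLog (Icc 0 (exp (-1))) := by
  refine monotoneOn_of_deriv_nonneg (convex_Icc _ _) continuous_negMulLog.continuousOn
    (differentiableOn_negMulLog.mono fun x hx => ?_) fun x hx => ?_
  · rw [interior_Icc] at hx
    exact hx.1.ne'
  · rw [interior_Icc] at hx
    rw [deriv_negMulLog hx.1.ne']
    have : log x < -1 := (log_lt_iff_lt_exp hx.1).2 hx.2
    linarith

lemma abs_negMulLog_sub_le {x y : ℝ} (hy : 0 ≤ y) (hyx : y ≤ x) (hx : x ≤ exp (-1)) :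
    |negMulLog x - negMulLog y| ≤ negMulLog (x - y) := by
  have hmono : negMulLog y ≤ negMulLog x :=
    monotoneOn_negMulLog ⟨hy, hyx.trans hx⟩ ⟨hy.trans hyx, hx⟩ hyx
  have hsub := negMulLog_add_le (sub_nonneg.2 hyx) hy
  rw [sub_add_cancel] at hsub
  rw [abs_of_nonneg (sub_nonneg.2 hmono)]
  linarith

lemma abs_log_one_add_sub_le {a b : ℝ} (ha : 0 ≤ a) (hb : 0 ≤ b) :
    |log (1 + a) - log (1 + b)| ≤ |a - b| := by
  wlog hba : b ≤ a generalizing a b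
  · rw [abs_sub_comm, abs_sub_comm a]
    exact this hb ha (le_of_not_ge hba)
  have hdiv : log (1 + a) - log (1 + b) = log ((1 + a) / (1 + b)) :=
    (log_div (by positivity) (by positivity)).symm
  have hle : (1 + a) / (1 + b) - 1 ≤ a - b := by
    rw [div_sub_one (by positivity), show 1 + a - (1 + b) = a - b by ring]
    exact div_le_self (by linarith) (by linarith)
  have hmono : log (1 + b) ≤ log (1 + a) := log_le_log (by positivity) (by linarith)
  rw [abs_of_nonneg (sub_nonneg.2 hmono), abs_of_nonneg (sub_nonneg.2 hba), hdiv]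
  exact (log_le_sub_one_of_pos (by positivity)).trans hle

lemma abs_cos_increment_sub_le (p q s t : ℝ) :
    |(cos (p + t) - cos p) - (cos (q + s) - cos q)| ≤ |t - s| + |s| * |p - q| := by
  have hsplit : (cos (p + t) - cos p) - (cos (q + s) - cos q) =
      (cos (p + t) - cos (p + s)) - 2 * sin (s / 2) * (sin (p + s / 2) - sin (q + s / 2)) := by
    rw [show cos p = cos (p + s) - (cos (p + s) - cos p) by ring,
      show cos q = cos (q + s) - (cos (q + s) - cos q) by ring, cos_sub_cos, cos_sub_cos]
    ring_nf
  have hsin : 2 * |sin (s / 2)| ≤ |s| := by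
    have := abs_sin_le_abs (x := s / 2)
    rw [abs_div, abs_two] at this
    linarith
  have hpq : |sin (p + s / 2) - sin (q + s / 2)| ≤ |p - q| := by
    simpa using abs_sin_sub_sin_le (p + s / 2) (q + s / 2)
  calc |(cos (p + t) - cos p) - (cos (q + s) - cos q)|
      ≤ |cos (p + t) - cos (p + s)|
          + 2 * |sin (s / 2)| * |sin (p + s / 2) - sin (q + s / 2)| := by
        rw [hsplit]
        refine (abs_sub _ _).trans (le_of_eq ?_)
        rw [abs_mul, abs_mul, abs_two]
    _ ≤ |t - s| + |s| * |p - q| := by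
        have hcos : |cos (p + t) - cos (p + s)| ≤ |t - s| := by
          simpa using abs_cos_sub_cos_le (p + t) (p + s)
        have := mul_le_mul hsin hpq (abs_nonneg _) (abs_nonneg _)
        linarith

lemma exists_exp_sub_nat_mul_lt (s : ℝ) {c r : ℝ} (hc : 0 < c) (hr : 0 < r) :
    ∃ n : ℕ, exp (s - n * c) < r := by
  obtain ⟨n, hn⟩ := exists_nat_gt ((s - log r) / c)
  refine ⟨n, (lt_log_iff_exp_lt hr).1 ?_⟩
  rw [div_lt_iff₀ hc] at hn
  linarith

end Real

theorem ergMax_nonpos_of_le_coboundary {T f g : ℝ → ℝ} {C : ℝ} (hg : Measurable g)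
    (hgC : ∀ x, |g x| ≤ C) (hfg : ∀ x ∈ Icc (0:ℝ) 1, f x ≤ g (T x) - g x) :
    ergMax T f ≤ 0 := by
  refine Real.sSup_nonpos ?_
  rintro _ ⟨μ, ⟨hμ, hμI, hμT⟩, rfl⟩
  by_cases hf : Integrable f μ
  swap
  · rw [integral_undef hf]
  have hT : AEMeasurable T μ := by
    by_contra hT
    rw [Measure.map_of_not_aemeasurable hT] at hμT
    exact hμ.ne_zero μ hμT.symm
  have hgμ : Integrable g μ :=
    .of_bound hg.aestronglyMeasurable C (ae_of_all _ hgC)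
  have hgTμ : Integrable (fun x => g (T x)) μ :=
    .of_bound (hg.comp_aemeasurable hT).aestronglyMeasurable C (ae_of_all _ fun x => hgC (T x))
  have hae : ∀ᵐ x ∂μ, x ∈ Icc (0:ℝ) 1 :=
    (prob_compl_eq_zero_iff measurableSet_Icc).2 hμI
  calc ∫ x, f x ∂μ ≤ ∫ x, (g (T x) - g x) ∂μ :=
        integral_mono_ae hf (hgTμ.sub hgμ) (hae.mono hfg)
    _ = 0 := by
        rw [integral_sub hgTμ hgμ, ← integral_map hT hg.aestronglyMeasurable, hμT, sub_self]

theorem IsSubaction.add_sub_le_iterate {T f u G : ℝ → ℝ} (hu : IsSubaction T f u)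
    (hm : ergMax T f ≤ 0) {x : ℝ} {n : ℕ} (horb : ∀ i < n, T^[i] x ∈ Icc (0:ℝ) 1)
    (hf : ∀ i < n, f (T^[i] x) = G (T^[i + 1] x) - G (T^[i] x)) :
    u x + (G (T^[n] x) - G x) ≤ u (T^[n] x) := by
  induction n with
  | zero => simp
  | succ n ih =>
    have hstep := hu _ (horb n n.lt_succ_self)
    rw [hf n n.lt_succ_self, ← Function.iterate_succ_apply' T] at hstep
    linarith [ih (fun i hi => horb i (hi.trans n.lt_succ_self))
      fun i hi => hf i (hi.trans n.lt_succ_self)]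

theorem exists_iterate_exit {g : ℝ → ℝ} {a p κ : ℝ} (hκ : 0 < κ) (hap : a ≤ p)
    (hstep : ∀ x ∈ Icc a p, x + κ ≤ g x) :
    ∃ N : ℕ, (∀ i ≤ N, g^[i] a ∈ Icc a p) ∧ p < g^[N + 1] a := by
  have hdrift : ∀ n : ℕ, (∀ i < n, g^[i] a ≤ p) → a + n * κ ≤ g^[n] a := by
    intro n
    induction n with
    | zero => simp
    | succ n ih =>
      intro hn
      have hlow := ih fun i hi => hn i (hi.trans n.lt_succ_self)
      have hmem : g^[n] a ∈ Icc a p :=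
        ⟨by nlinarith [n.cast_nonneg (α := ℝ)], hn n n.lt_succ_self⟩
      rw [Function.iterate_succ_apply']
      push_cast
      linarith [hstep _ hmem]
  have hexit : ∃ n, p < g^[n] a := by
    obtain ⟨n, hn⟩ := exists_nat_gt ((p - a) / κ)
    rw [div_lt_iff₀ hκ] at hn
    by_contra! hstay
    linarith [hdrift n fun i _ => hstay i, hstay n]
  have hmin : ∀ i < Nat.find hexit, g^[i] a ≤ p := fun i hi => not_lt.1 (Nat.find_min hexit hi)
  obtain ⟨N, hN⟩ : ∃ N, Nat.find hexit = N + 1 :=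
    Nat.exists_eq_succ_of_ne_zero fun h0 => by
      have := Nat.find_spec hexit
      rw [h0, Function.iterate_zero_apply] at this
      linarith
  refine ⟨N, fun i hi => ⟨?_, hmin i (by omega)⟩, hN ▸ Nat.find_spec hexit⟩
  have := hdrift i fun j hj => hmin j (by omega)
  nlinarith [i.cast_nonneg (α := ℝ)]

theorem memCmod_of_local_bound {ω f : ℝ → ℝ} {z B C : ℝ} (hz : 0 ≤ z) (hC : 0 < C)
    (hmono : MonotoneOn ω (Ici 0)) (hnn : ∀ h, 0 ≤ h → 0 ≤ ω h) (hωz : 0 < ω z)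
    (hB : ∀ x ∈ Icc (0:ℝ) 1, |f x| ≤ B)
    (hloc : ∀ x ∈ Icc (0:ℝ) 1, ∀ y ∈ Icc (0:ℝ) 1, |x - y| ≤ z →
      |f x - f y| ≤ C * ω |x - y|) :
    MemCmod ω f := by
  have hB0 : 0 ≤ B := (abs_nonneg _).trans (hB 0 ⟨le_rfl, zero_le_one⟩)
  refine ⟨C + 2 * B / ω z, by positivity, fun x hx y hy => ?_⟩
  have hωxy := hnn _ (abs_nonneg (x - y))
  rcases le_or_gt |x - y| z with hnear | hfar
  · have : 0 ≤ 2 * B / ω z * ω |x - y| := by positivity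
    linarith [hloc x hx y hy hnear]
  · have hωle : ω z ≤ ω |x - y| := hmono (mem_Ici.2 hz) (mem_Ici.2 (abs_nonneg _)) hfar.le
    have hdiff : |f x - f y| ≤ 2 * B := by
      linarith [abs_sub (f x) (f y), hB x hx, hB y hy]
    have : 2 * B ≤ 2 * B / ω z * ω |x - y| := by
      rw [div_mul_eq_mul_div, le_div_iff₀ hωz]
      exact mul_le_mul_of_nonneg_left hωle (by positivity)
    nlinarith

namespace LogPerturbation

def logPerturb (x : ℝ) : ℝ := x + (2 / log 2) * x ^ (2:ℕ) * |log x|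

def halfCosLog (x : ℝ) : ℝ := cos (log x) / 2

def cosLogDefect (x : ℝ) : ℝ := halfCosLog (logPerturb x) - halfCosLog x

lemma two_div_log_two_le_three : 2 / log 2 ≤ 3 := by
  rw [div_le_iff₀ (log_pos one_lt_two)]
  linarith [log_two_gt_d9]

lemma logPerturb_eq {x : ℝ} (hx0 : 0 ≤ x) (hx1 : x ≤ 1) :
    logPerturb x = x * (1 + 2 / log 2 * negMulLog x) := by
  rw [logPerturb, abs_of_nonpos (log_nonpos hx0 hx1), negMulLog]
  ring

lemma self_le_logPerturb {x : ℝ} : x ≤ logPerturb x := by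
  have : 0 ≤ 2 / log 2 * x ^ (2:ℕ) * |log x| := by positivity
  rw [logPerturb]
  linarith

lemma logPerturb_le_four_mul {x : ℝ} (hx0 : 0 ≤ x) (hx1 : x ≤ 1) :
    logPerturb x ≤ 4 * x := by
  have hn0 := negMulLog_nonneg hx0 hx1
  have hn1 : negMulLog x ≤ 1 := by linarith [negMulLog_le_one_sub_self hx0]
  have : 2 / log 2 * negMulLog x ≤ 3 :=
    (mul_le_of_le_one_right (by positivity) hn1).trans two_div_log_two_le_three
  rw [logPerturb_eq hx0 hx1]
  nlinarith

lemma abs_halfCosLog_le (x : ℝ) : |halfCosLog x| ≤ 1 / 2 := by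
  rw [halfCosLog, abs_div, abs_two]
  linarith [abs_cos_le_one (log x)]

lemma halfCosLog_exp_sub (s : ℝ) (n : ℕ) : halfCosLog (exp (s - n * (2 * π))) = cos s / 2 := by
  rw [halfCosLog, log_exp, cos_sub_nat_mul_two_pi]

lemma cosLogDefect_eq {x : ℝ} (hx0 : 0 < x) (hx1 : x ≤ 1) :
    cosLogDefect x =
      (cos (log x + log (1 + 2 / log 2 * negMulLog x)) - cos (log x)) / 2 := by
  have : 0 ≤ 2 / log 2 * negMulLog x := by
    have := negMulLog_nonneg hx0.le hx1
    positivity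
  rw [cosLogDefect, halfCosLog, halfCosLog, logPerturb_eq hx0.le hx1,
    log_mul hx0.ne' (by linarith), sub_div]

lemma abs_cosLogDefect_le {x : ℝ} (hx0 : 0 ≤ x) (hx1 : x ≤ 1) :
    |cosLogDefect x| ≤ 3 / 2 * negMulLog x := by
  rcases hx0.eq_or_lt with rfl | hx0
  · simp [cosLogDefect, logPerturb]
  have hA : 0 ≤ 2 / log 2 * negMulLog x := by
    have := negMulLog_nonneg hx0.le hx1
    positivity
  have hτ : |log (1 + 2 / log 2 * negMulLog x)| ≤ 3 * negMulLog x := by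
    rw [abs_of_nonneg (log_nonneg (by linarith))]
    linarith [log_le_sub_one_of_pos (show 0 < 1 + 2 / log 2 * negMulLog x by linarith),
      mul_le_mul_of_nonneg_right two_div_log_two_le_three (negMulLog_nonneg hx0.le hx1)]
  have := abs_cos_sub_cos_le (log x + log (1 + 2 / log 2 * negMulLog x)) (log x)
  rw [add_sub_cancel_left] at this
  rw [cosLogDefect_eq hx0 hx1, abs_div, abs_two]
  linarith

/-- The phase `log x - log y` drifts by at most `(x - y) / y`, which costs `(x - y) log (1/y)`
against the amplitude `τ y ≈ y log (1/y)`; this is `≲ (x - y) log (1/(x - y))` as soon as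
`x - y ≤ y`. -/
lemma abs_cosLogDefect_sub_le_of_sub_le {x y : ℝ} (hy : 0 < y) (hyx : y < x) (hx : x ≤ 1 / 8)
    (hxy : x - y ≤ y) :
    |cosLogDefect x - cosLogDefect y| ≤ 3 * negMulLog (x - y) := by
  have hexp : (1:ℝ) / 4 ≤ exp (-1) := by linarith [exp_neg_one_gt_d9]
  have hh : 0 < x - y := sub_pos.2 hyx
  set c := 2 / log 2
  have hc0 : 0 < c := by positivity
  have hc3 : c ≤ 3 := two_div_log_two_le_three
  have hny := negMulLog_nonneg hy.le (by linarith)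
  have hnx := negMulLog_nonneg (hy.trans hyx).le (by linarith)
  have hτ : |log (1 + c * negMulLog x) - log (1 + c * negMulLog y)| ≤ 3 * negMulLog (x - y) := by
    refine (abs_log_one_add_sub_le (by positivity) (by positivity)).trans ?_
    rw [← mul_sub, abs_mul, abs_of_pos hc0]
    exact mul_le_mul hc3 (abs_negMulLog_sub_le hy.le hyx.le (by linarith)) (abs_nonneg _)
      (by norm_num)
  have hτy : |log (1 + c * negMulLog y)| ≤ c * negMulLog y := by
    rw [abs_of_nonneg (log_nonneg (by nlinarith))]
    linarith [log_le_sub_one_of_pos (show 0 < 1 + c * negMulLog y by positivity)]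
  have hphase : |log x - log y| ≤ (x - y) / y := by
    rw [← log_div (by linarith) hy.ne', abs_of_nonneg (log_nonneg ((one_le_div hy).2 hyx.le))]
    refine (log_le_sub_one_of_pos (div_pos (by linarith) hy)).trans (le_of_eq ?_)
    field_simp
  have hcross : c * negMulLog y * ((x - y) / y) ≤ 3 * negMulLog (x - y) := by
    have hly : -log y ≤ -log (x - y) := by linarith [log_le_log hh hxy]
    have hly0 : 0 ≤ -log y := by linarith [log_nonpos hy.le (show y ≤ 1 by linarith)]
    have : c * negMulLog y * ((x - y) / y) = c * ((x - y) * -log y) := by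
      rw [negMulLog]
      field_simp
    rw [this, negMulLog, neg_mul, ← mul_neg]
    exact mul_le_mul hc3 (mul_le_mul_of_nonneg_left hly hh.le) (by positivity) (by norm_num)
  have hprod : |log (1 + c * negMulLog y)| * |log x - log y| ≤ 3 * negMulLog (x - y) :=
    (mul_le_mul hτy hphase (abs_nonneg _) (by positivity)).trans hcross
  have := abs_cos_increment_sub_le (log x) (log y) (log (1 + c * negMulLog y))
    (log (1 + c * negMulLog x))
  rw [cosLogDefect_eq (by linarith) (by linarith), cosLogDefect_eq hy (by linarith),
    ← sub_div, abs_div, abs_two]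
  linarith

lemma abs_cosLogDefect_sub_le {x y : ℝ} (hx : x ∈ Icc (0:ℝ) (1 / 8))
    (hy : y ∈ Icc (0:ℝ) (1 / 8)) :
    |cosLogDefect x - cosLogDefect y| ≤ 5 * negMulLog |x - y| := by
  wlog hyx : y ≤ x generalizing x y
  · rw [abs_sub_comm, abs_sub_comm x]
    exact this hy hx (le_of_not_ge hyx)
  obtain ⟨hx0, hx8⟩ := hx
  obtain ⟨hy0, hy8⟩ := hy
  have hexp : (1:ℝ) / 4 ≤ exp (-1) := by linarith [exp_neg_one_gt_d9]
  have hh0 : 0 ≤ x - y := sub_nonneg.2 hyx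
  have hnh := negMulLog_nonneg hh0 (by linarith)
  rw [abs_of_nonneg hh0]
  rcases le_or_gt y (x - y) with hsmall | hlarge
  · have hnx : negMulLog x ≤ 2 * negMulLog (x - y) := by
      have := monotoneOn_negMulLog ⟨hx0, by linarith⟩ ⟨by linarith, by linarith⟩
        (show x ≤ (x - y) + (x - y) by linarith)
      linarith [negMulLog_add_le hh0 hh0]
    have hny : negMulLog y ≤ negMulLog (x - y) :=
      monotoneOn_negMulLog ⟨hy0, by linarith⟩ ⟨hh0, by linarith⟩ hsmall
    linarith [abs_sub (cosLogDefect x) (cosLogDefect y),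
      abs_cosLogDefect_le hx0 (by linarith), abs_cosLogDefect_le hy0 (by linarith)]
  · rcases hyx.eq_or_lt with rfl | hyx
    · simp
    linarith [abs_cosLogDefect_sub_le_of_sub_le (hh0.trans_lt hlarge) hyx hx8 hlarge.le]

def potential (z x : ℝ) : ℝ := cosLogDefect (min x z) - 2 / z * min (max (x - z) 0) z

/-- Its value `-1/2` at `0` is its minimum, so the coboundary inequality at the fixed point `0`
holds whatever `T 0` is. -/
def discontinuousSubaction (z x : ℝ) : ℝ := if x ≤ 0 then -(1 / 2) else halfCosLog (min x z)

variable {z : ℝ}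

lemma potential_eq_cosLogDefect {x : ℝ} (hx0 : 0 ≤ x) (hxz : x ≤ z) :
    potential z x = cosLogDefect x := by
  simp [potential, min_eq_left hxz, max_eq_right (sub_nonpos.2 hxz), hx0.trans hxz]

lemma abs_potential_le (hz : 0 < z) (x : ℝ) : |potential z x| ≤ 3 := by
  have hramp : |2 / z * min (max (x - z) 0) z| ≤ 2 := by
    rw [abs_of_nonneg (by positivity), div_mul_eq_mul_div, div_le_iff₀ hz]
    linarith [min_le_right (max (x - z) 0) z]
  have hdefect : |cosLogDefect (min x z)| ≤ 1 := by
    rw [cosLogDefect]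
    linarith [abs_sub (halfCosLog (logPerturb (min x z))) (halfCosLog (min x z)),
      abs_halfCosLog_le (logPerturb (min x z)), abs_halfCosLog_le (min x z)]
  rw [potential]
  linarith [abs_sub (cosLogDefect (min x z)) (2 / z * min (max (x - z) 0) z)]

lemma abs_potential_sub_le (hz : 0 < z) (hz8 : z ≤ 1 / 8) {x y : ℝ} (hx : 0 ≤ x)
    (hy : 0 ≤ y) (hxy : |x - y| ≤ z) :
    |potential z x - potential z y| ≤ 5 * negMulLog |x - y| + 2 / z * |x - y| := by
  have hmin : |min x z - min y z| ≤ |x - y| := by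
    simpa using abs_min_sub_min_le_max x z y z
  have hramp : |min (max (x - z) 0) z - min (max (y - z) 0) z| ≤ |x - y| := by
    refine (abs_min_sub_min_le_max _ _ _ _).trans ?_
    simpa using abs_max_sub_max_le_abs (x - z) (y - z) 0
  have hdefect : |cosLogDefect (min x z) - cosLogDefect (min y z)| ≤ 5 * negMulLog |x - y| := by
    have hexp : (1:ℝ) / 4 ≤ exp (-1) := by linarith [exp_neg_one_gt_d9]
    refine (abs_cosLogDefect_sub_le ⟨le_min hx hz.le, (min_le_right _ _).trans hz8⟩
      ⟨le_min hy hz.le, (min_le_right _ _).trans hz8⟩).trans ?_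
    gcongr
    exact monotoneOn_negMulLog ⟨abs_nonneg _, by linarith⟩ ⟨abs_nonneg _, by linarith⟩ hmin
  have hsplit : potential z x - potential z y = (cosLogDefect (min x z) - cosLogDefect (min y z))
      - 2 / z * (min (max (x - z) 0) z - min (max (y - z) 0) z) := by
    rw [potential, potential]
    ring
  rw [hsplit]
  refine (abs_sub _ _).trans (add_le_add hdefect ?_)
  rw [abs_mul, abs_of_pos (by positivity : 0 < 2 / z)]
  exact mul_le_mul_of_nonneg_left hramp (by positivity)

lemma measurable_discontinuousSubaction : Measurable (discontinuousSubaction z) :=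
  Measurable.ite measurableSet_Iic measurable_const
    (((continuous_cos.measurable.comp measurable_log).div_const 2).comp
      (measurable_id.min measurable_const))

lemma abs_discontinuousSubaction_le (x : ℝ) : |discontinuousSubaction z x| ≤ 1 / 2 := by
  rw [discontinuousSubaction]
  split_ifs
  · norm_num [abs_of_neg]
  · exact abs_halfCosLog_le _

lemma potential_le_coboundary {T : ℝ → ℝ} {ε : ℝ} (hz : 0 < z) (hzε : 2 * z ≤ ε)
    (hT : ∀ x ∈ Ioo 0 ε, T x = logPerturb x) (hGz : halfCosLog z = 1 / 2) {x : ℝ}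
    (hx : 0 ≤ x) :
    potential z x ≤ discontinuousSubaction z (T x) - discontinuousSubaction z x := by
  have hP : ∀ w, -(1 / 2) ≤ discontinuousSubaction z w := fun w =>
    (abs_le.1 (abs_discontinuousSubaction_le w)).1
  have hG : ∀ w, halfCosLog w ≤ 1 / 2 := fun w => (abs_le.1 (abs_halfCosLog_le w)).2
  rcases hx.eq_or_lt with rfl | hx
  · have hf0 : potential z 0 = 0 := by simp [potential, cosLogDefect, logPerturb, hz.le]
    have hP0 : discontinuousSubaction z 0 = -(1 / 2) := if_pos le_rfl
    linarith [hP (T 0)]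
  have hPx : discontinuousSubaction z x = halfCosLog (min x z) := if_neg hx.not_ge
  rcases le_or_gt x z with hxz | hzx
  · have hTx : T x = logPerturb x := hT x ⟨hx, by linarith⟩
    have hTx0 : 0 < T x := hTx ▸ hx.trans_le self_le_logPerturb
    rw [potential_eq_cosLogDefect hx.le hxz, cosLogDefect, hPx, min_eq_left hxz,
      discontinuousSubaction, if_neg hTx0.not_ge, hTx]
    rcases le_total (logPerturb x) z with hS | hS
    · rw [min_eq_left hS]
    · rw [min_eq_right hS, hGz]
      linarith [hG (logPerturb x)]
  · have hDz : cosLogDefect z ≤ 0 := by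
      rw [cosLogDefect, hGz]
      linarith [hG (logPerturb z)]
    rw [hPx, min_eq_right hzx.le, hGz, potential, min_eq_right hzx.le]
    rcases lt_or_ge x ε with hxε | hεx
    · have hTx : z < T x := hT x ⟨hx, hxε⟩ ▸ hzx.trans_le self_le_logPerturb
      rw [discontinuousSubaction, if_neg (hz.trans hTx).not_ge, min_eq_right hTx.le, hGz]
      have : 0 ≤ 2 / z * min (max (x - z) 0) z := by positivity
      linarith
    · have hramp : min (max (x - z) 0) z = z := by
        rw [max_eq_left (by linarith), min_eq_right (by linarith)]
      rw [hramp, div_mul_cancel₀ _ hz.ne']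
      linarith [hP (T x)]

lemma memCmod_potential {ω : ℝ → ℝ} {k δ : ℝ} (hk : 0 < k) (hmono : MonotoneOn ω (Ici 0))
    (hnn : ∀ h, 0 ≤ h → 0 ≤ ω h)
    (hωδ : ∀ h ∈ Ioo (0:ℝ) δ, ω h = h * (log (1 / h ^ k) + 1))
    (hz : 0 < z) (hzδ : z < δ) (hz8 : z ≤ 1 / 8) :
    MemCmod ω (potential z) := by
  have hform : ∀ h ∈ Ioo (0:ℝ) δ, ω h = k * negMulLog h + h := fun h hh => by
    rw [hωδ h hh, one_div, log_inv, log_rpow hh.1, negMulLog]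
    ring
  have hωz : 0 < ω z := by
    rw [hform z ⟨hz, hzδ⟩]
    have := negMulLog_nonneg hz.le (by linarith)
    positivity
  refine memCmod_of_local_bound (B := 3) (C := 5 / k + 2 / z) hz.le (by positivity) hmono hnn hωz
    (fun x _ => abs_potential_le hz x) fun x hx y hy hxy => ?_
  refine (abs_potential_sub_le hz hz8 hx.1 hy.1 hxy).trans ?_
  rcases (abs_nonneg (x - y)).eq_or_lt with h0 | hpos
  · rw [← h0, negMulLog_zero]
    simpa using mul_nonneg (by positivity) (hnn 0 le_rfl)
  · have hn := negMulLog_nonneg (abs_nonneg (x - y)) (by linarith)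
    have hsplit : (5 / k + 2 / z) * (k * negMulLog |x - y| + |x - y|) =
        5 * negMulLog |x - y| + 2 / z * |x - y|
          + (5 / k * |x - y| + 2 / z * k * negMulLog |x - y|) := by
      field_simp
      ring
    rw [hform _ ⟨hpos, by linarith⟩, hsplit]
    have : 0 ≤ 5 / k * |x - y| + 2 / z * k * negMulLog |x - y| := by positivity
    linarith

lemma halfCosLog_nonneg_of_mem_Ioc (m : ℕ) {y : ℝ}
    (hy : y ∈ Ioc (exp (-(π / 2) - m * (2 * π))) (exp (π / 2 - m * (2 * π)))) :
    0 ≤ halfCosLog y := by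
  have hy0 : 0 < y := (exp_pos _).trans hy.1
  have hlower := (lt_log_iff_exp_lt hy0).2 hy.1
  have hupper := (log_le_iff_le_exp hy0).2 hy.2
  rw [← exp_log hy0, ← add_sub_cancel_right (log y) (m * (2 * π)), halfCosLog_exp_sub]
  exact div_nonneg (cos_nonneg_of_mem_Icc ⟨by linarith, by linarith⟩) zero_le_two

lemma exists_iterate_mem_Ioc {T : ℝ → ℝ} {ε a p : ℝ} (ha : 0 < a) (hap : a ≤ p)
    (hpε : p < ε) (hp1 : p < 1) (hT : ∀ x ∈ Ioo 0 ε, T x = logPerturb x) :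
    ∃ N : ℕ, (∀ i ≤ N, T^[i] a ∈ Icc a p) ∧ T^[N + 1] a ∈ Ioc p (4 * p) := by
  have hlog_p : log p < 0 := log_neg (ha.trans_le hap) hp1
  have hκ : 0 < 2 / log 2 * a ^ 2 * |log p| := by
    have := abs_pos.2 hlog_p.ne
    positivity
  have hstep : ∀ x ∈ Icc a p, x + 2 / log 2 * a ^ 2 * |log p| ≤ T x := by
    rintro x ⟨hax, hxp⟩
    have hx0 : 0 < x := ha.trans_le hax
    have hlog : |log p| ≤ |log x| := by
      rw [abs_of_neg hlog_p, abs_of_neg (log_neg hx0 (by linarith))]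
      linarith [log_le_log hx0 hxp]
    rw [hT x ⟨hx0, by linarith⟩, logPerturb]
    gcongr
  obtain ⟨N, horb, hexit⟩ := exists_iterate_exit hκ hap hstep
  obtain ⟨haN, hNp⟩ := horb N le_rfl
  refine ⟨N, horb, hexit, ?_⟩
  rw [Function.iterate_succ_apply', hT _ ⟨ha.trans_le haN, by linarith⟩]
  linarith [logPerturb_le_four_mul (ha.trans_le haN).le (by linarith)]

theorem not_continuousWithinAt_zero_of_isSubaction {T f u : ℝ → ℝ} {ε : ℝ} (hz : 0 < z)
    (hzε : z ≤ ε) (hz1 : z ≤ 1) (hT : ∀ x ∈ Ioo 0 ε, T x = logPerturb x)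
    (hf : ∀ x ∈ Ioc 0 z, f x = cosLogDefect x) (hm : ergMax T f ≤ 0)
    (hu : IsSubaction T f u) :
    ¬ ContinuousWithinAt u (Icc 0 1) 0 := by
  intro hcont
  obtain ⟨ρ, hρ, hclose⟩ := Metric.continuousWithinAt_iff.1 hcont (1 / 4) (by norm_num)
  obtain ⟨m, hm_lt⟩ := exists_exp_sub_nat_mul_lt (π / 2) two_pi_pos (lt_min hρ hz)
  rw [lt_min_iff] at hm_lt
  set q := exp (π / 2 - m * (2 * π))
  set p := exp (-(π / 2) - m * (2 * π))
  set a := exp (-π - m * (2 * π))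
  have h4p : 4 * p ≤ q := by
    have hq : q = exp π * p := by simp only [q, p, ← exp_add]; ring_nf
    rw [hq]
    nlinarith [add_one_le_exp π, pi_gt_three, exp_pos (-(π / 2) - m * (2 * π))]
  have hpz : p < z := by linarith [exp_pos (-(π / 2) - m * (2 * π))]
  have hap : a ≤ p := exp_le_exp.2 (by linarith [pi_pos])
  obtain ⟨N, horb, hexit⟩ := exists_iterate_mem_Ioc (exp_pos _) hap (by linarith)
    (by linarith) hT
  have horb_z : ∀ i ≤ N, T^[i] a ∈ Ioc 0 z := fun i hi =>
    ⟨(exp_pos _).trans_le (horb i hi).1, (horb i hi).2.trans hpz.le⟩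
  set y := T^[N + 1] a
  have hy : y ∈ Ioc p q := ⟨hexit.1, hexit.2.trans h4p⟩
  have hgain := hu.add_sub_le_iterate (G := halfCosLog) hm (n := N + 1)
    (fun i hi => Ioc_subset_Icc_self (Ioc_subset_Ioc_right hz1 (horb_z i (by omega))))
    fun i hi => by
      rw [Function.iterate_succ_apply', hT _ ⟨(horb_z i (by omega)).1, by
        linarith [(horb i (by omega)).2]⟩, hf _ (horb_z i (by omega)), cosLogDefect]
  have hGa : halfCosLog a = -(1 / 2) := by
    rw [halfCosLog_exp_sub, cos_neg, cos_pi]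
    norm_num
  have hGy : 0 ≤ halfCosLog y := halfCosLog_nonneg_of_mem_Ioc m hy
  have hy0 : 0 < y := (exp_pos _).trans hy.1
  have hua := hclose (x := a) ⟨(exp_pos _).le, by linarith⟩
    (by rw [dist_zero_right, norm_of_nonneg (exp_pos _).le]; linarith)
  have huy := hclose (x := y) ⟨hy0.le, by linarith [hy.2]⟩
    (by rw [dist_zero_right, norm_of_nonneg hy0.le]; linarith [hy.2])
  rw [dist_eq] at hua huy
  linarith [abs_lt.1 hua, abs_lt.1 huy]

end LogPerturbation

open LogPerturbation in
theorem log_perturbation_no_continuous_subaction_general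
    (T : ℝ → ℝ)
    (hloc : ∃ ε > (0:ℝ), ∀ x ∈ Ioo (0:ℝ) ε,
      T x = x + (2 / Real.log 2) * x ^ (2:ℕ) * |Real.log x|)
    (k : ℝ) (hk : 0 < k)
    (ω : ℝ → ℝ) (hω : ConcaveModulus ω)
    (hωform : ∃ δ > (0:ℝ), ∀ h ∈ Ioo (0:ℝ) δ, ω h = h * (Real.log (1 / h ^ k) + 1)) :
    ∃ f : ℝ → ℝ, MemCmod ω f ∧
      ¬ ∃ u : ℝ → ℝ, ContinuousOn u (Icc 0 1) ∧ IsSubaction T f u := by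
  obtain ⟨ε, hε, hT⟩ := hloc
  obtain ⟨δ, hδ, hωδ⟩ := hωform
  obtain ⟨M, hM⟩ := exists_exp_sub_nat_mul_lt 0 two_pi_pos
    (lt_min (lt_min (half_pos hε) hδ) (by norm_num : (0:ℝ) < 1 / 8))
  simp only [lt_min_iff] at hM
  obtain ⟨⟨hzε, hzδ⟩, hz8⟩ := hM
  set z := exp (0 - M * (2 * π))
  have hz : 0 < z := exp_pos _
  have hGz : halfCosLog z = 1 / 2 := by rw [halfCosLog_exp_sub, cos_zero]
  have hm : ergMax T (potential z) ≤ 0 :=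
    ergMax_nonpos_of_le_coboundary measurable_discontinuousSubaction
      abs_discontinuousSubaction_le
      fun x hx => potential_le_coboundary hz (by linarith) hT hGz hx.1
  refine ⟨potential z, memCmod_potential hk hω.2.1 hω.2.2.2.1 hωδ hz hzδ hz8.le, ?_⟩
  rintro ⟨u, hu, hsub⟩
  exact not_continuousWithinAt_zero_of_isSubaction hz (by linarith) (by linarith) hT
    (fun x hx => potential_eq_cosLogDefect hx.1.le hx.2) hm hsub (hu 0 ⟨le_rfl, zero_le_one⟩)

theorem log_perturbation_no_continuous_subaction
    (T : ℝ → ℝ)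
    (hTmaps : MapsTo T (Icc 0 1) (Icc 0 1))
    (hloc : ∃ ε > (0:ℝ), ∀ x ∈ Ioo (0:ℝ) ε,
      T x = x + (2 / Real.log 2) * x ^ (2:ℕ) * |Real.log x|)
    (k : ℝ) (hk : 0 < k)
    (ω : ℝ → ℝ) (hω : ConcaveModulus ω)
    (hωform : ∃ δ > (0:ℝ), ∀ h ∈ Ioo (0:ℝ) δ, ω h = h * (Real.log (1 / h ^ k) + 1)) :
    ∃ f : ℝ → ℝ, MemCmod ω f ∧
      ¬ ∃ u : ℝ → ℝ, ContinuousOn u (Icc 0 1) ∧ IsSubaction T f u :=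
  log_perturbation_no_continuous_subaction_general T hloc k hk ω hω hωform

end
end

section
/- Let T(x) = x(1 − V(x)) for x near 0, where T is invertible near 0 and V : [0,∞) → (0,1) is continuous, increasing, and regularly varying at 0 with index σ > 0. Let b be the inverse function of x ↦ 1/V(1/x) and let (w_n) be defined by w_{n+1} = T(w_n) with w₀ > 0 close enough to 0. Then d(w_n, w_{n+1}) ~ (1/σ^{1+1/σ}) · 1/(n·b(n)) as n → ∞, i.e. lim_{n→∞} |w_n − w_{n+1}| · σ^{1+1/σ} n b(n) = 1. -/
/-!
Let `G(x) = ∫_x^{x₀} du / (u V(u))`. Since `w n - w (n+1) = w n V(w n)` and `V(w (n+1)) ~ V(w n)`,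
each step of the orbit increases `G` by an amount tending to `1`, so `G(w n) ~ n` (Cesàro).
Karamata's theorem `G(x) V(x) → 1/σ` as `x → 0⁺` then gives `n V(w n) → 1/σ`; it is proved by
splitting `(x, x₀]` into geometric annuli `(x, r x]`, on which `V(r x) / V(x) ≈ r ^ σ`, and
summing the resulting geometric series before letting `r → 1`. Finally `b n = 1 / y n` with
`V(y n) = 1/n`, and regular variation turns `V(w n) / V(y n) → 1/σ` into
`w n / y n → σ ^ (-1/σ)`.
-/

open Set Filter Topology Real

namespace RegVary0

variable {V : ℝ → ℝ} {σ : ℝ} {ι : Type*} {l : Filter ι}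

theorem apply_zero (hV : RegVary0 V σ) (hσ : 0 < σ) (hVcont : ContinuousWithinAt V (Ici 0) 0) :
    V 0 = 0 := by
  by_contra h0
  have hcont : Tendsto V (𝓝[>] 0) (𝓝 (V 0)) :=
    hVcont.tendsto.mono_left (nhdsWithin_mono _ Ioi_subset_Ici_self)
  have hdouble : Tendsto (2 * ·) (𝓝[>] (0:ℝ)) (𝓝[>] 0) :=
    tendsto_iff_comap.2 (comap_mulLeft_nhdsGT_zero two_pos).ge
  have hratio : Tendsto (fun x => V (2 * x) / V x) (𝓝[>] 0) (𝓝 1) := by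
    have hnum : Tendsto (fun x => V (2 * x)) (𝓝[>] 0) (𝓝 (V 0)) := hcont.comp hdouble
    rw [← div_self h0]
    exact hnum.div hcont h0
  exact (Real.one_lt_rpow one_lt_two hσ).ne' (tendsto_nhds_unique (hV 2 two_pos) hratio)

theorem tendsto_apply_mul_div (hV : RegVary0 V σ) (hVmono : MonotoneOn V (Ioi 0))
    (hVpos : ∀ x > 0, 0 < V x) {x t : ι → ℝ} {c : ℝ} (hc : 0 < c)
    (hx : Tendsto x l (𝓝[>] 0)) (ht : Tendsto t l (𝓝 c)) :
    Tendsto (fun i => V (t i * x i) / V (x i)) l (𝓝 (c ^ σ)) := by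
  have hxpos : ∀ᶠ i in l, 0 < x i := hx.eventually self_mem_nhdsWithin
  have hrpow : Tendsto (· ^ σ) (𝓝 c) (𝓝 (c ^ σ)) :=
    (Real.continuousAt_rpow_const c σ (Or.inl hc.ne')).tendsto
  -- squeeze `t i` between constants close to `c`
  have hmono : ∀ {s s' y : ℝ}, 0 < s → s ≤ s' → 0 < y → V (s * y) / V y ≤ V (s' * y) / V y :=
    fun hs hss' hy => div_le_div_of_nonneg_right
      (hVmono (mul_pos hs hy) (mul_pos (hs.trans_le hss') hy) (by gcongr)) (hVpos _ hy).le
  refine tendsto_order.2 ⟨fun a ha => ?_, fun a ha => ?_⟩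
  · obtain ⟨u, ⟨hau, hu0⟩, huc⟩ := ((((hrpow.eventually (lt_mem_nhds ha)).and
      (lt_mem_nhds hc)).filter_mono nhdsWithin_le_nhds).and self_mem_nhdsWithin).exists
      (f := 𝓝[<] c)
    filter_upwards [((hV u hu0).comp hx).eventually (lt_mem_nhds hau),
      ht.eventually (lt_mem_nhds huc), hxpos] with i h1 h2 h3
    exact h1.trans_le (hmono hu0 h2.le h3)
  · obtain ⟨u, hau, hcu⟩ := (((hrpow.eventually (gt_mem_nhds ha)).filter_mono
      nhdsWithin_le_nhds).and self_mem_nhdsWithin).exists (f := 𝓝[>] c)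
    filter_upwards [((hV u (hc.trans hcu)).comp hx).eventually (gt_mem_nhds hau),
      ht.eventually (gt_mem_nhds hcu), ht.eventually (lt_mem_nhds hc), hxpos] with i h1 h2 h3 h4
    exact (hmono h3 h2.le h4).trans_lt h1

theorem tendsto_div_of_tendsto_apply_div (hV : RegVary0 V σ) (hσ : 0 < σ)
    (hVmono : MonotoneOn V (Ioi 0)) (hVpos : ∀ x > 0, 0 < V x) {u y : ι → ℝ} {c : ℝ}
    (hc : 0 < c) (hy : Tendsto y l (𝓝[>] 0)) (hu : ∀ᶠ i in l, 0 < u i)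
    (huy : Tendsto (fun i => V (u i) / V (y i)) l (𝓝 c)) :
    Tendsto (fun i => u i / y i) l (𝓝 (c ^ σ⁻¹)) := by
  have hypos : ∀ᶠ i in l, 0 < y i := hy.eventually self_mem_nhdsWithin
  have hlt_of_lt : ∀ {s s' : ℝ}, 0 < s' → V s < V s' → s < s' := fun hs' h =>
    not_le.1 fun h' => h.not_ge (hVmono hs' (hs'.trans_le h') h')
  refine tendsto_order.2 ⟨fun a ha => ?_, fun a ha => ?_⟩
  · rcases le_or_gt a 0 with ha0 | ha0
    · filter_upwards [hu, hypos] with i hui hyi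
      exact ha0.trans_lt (div_pos hui hyi)
    filter_upwards [((hV a ha0).comp hy).eventually_lt huy
      ((Real.lt_rpow_inv_iff_of_pos ha0.le hc.le hσ).1 ha), hu, hypos] with i hlt hui hyi
    rw [lt_div_iff₀ hyi]
    exact hlt_of_lt hui ((div_lt_div_iff_of_pos_right (hVpos _ hyi)).1 hlt)
  · have ha0 : 0 < a := (Real.rpow_pos_of_pos hc _).trans ha
    filter_upwards [huy.eventually_lt ((hV a ha0).comp hy)
      ((Real.rpow_inv_lt_iff_of_pos hc.le ha0.le hσ).1 ha), hu, hypos] with i hlt hui hyi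
    rw [div_lt_iff₀ hyi]
    exact hlt_of_lt (mul_pos ha0 hyi) ((div_lt_div_iff_of_pos_right (hVpos _ hyi)).1 hlt)

theorem exists_forall_Ioc_apply_mul_div_mem (hV : RegVary0 V σ) {r x₀ : ℝ} (hr : 0 < r)
    (hx₀ : 0 < x₀) {s : Set ℝ} (hs : s ∈ 𝓝 (r ^ σ)) :
    ∃ y₀ > 0, r * y₀ ≤ x₀ ∧ ∀ x ∈ Ioc 0 y₀, V (r * x) / V x ∈ s := by
  obtain ⟨y₀, hy₀ : 0 < y₀, hsub⟩ := mem_nhdsGT_iff_exists_Ioc_subset.1 ((hV r hr).eventually hs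
    |>.and (eventually_nhdsWithin_of_eventually_nhds (eventually_lt_nhds (div_pos hx₀ hr))))
  refine ⟨y₀, hy₀, ?_, fun x hx => (hsub hx).1⟩
  have h := (hsub ⟨hy₀, le_rfl⟩).2
  rw [lt_div_iff₀ hr, mul_comm] at h
  exact h.le

end RegVary0

theorem AntitoneOn.sub_mul_le_intervalIntegral {f : ℝ → ℝ} {a b : ℝ} (hab : a ≤ b)
    (hf : AntitoneOn f (Icc a b)) : (b - a) * f b ≤ ∫ x in a..b, f x := by
  have hf' : AntitoneOn f (uIcc a b) := by rwa [uIcc_of_le hab]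
  have h := intervalIntegral.integral_mono_on hab intervalIntegrable_const
    (hf'.intervalIntegrable (μ := MeasureTheory.volume))
    fun x hx => hf hx ⟨hab, le_rfl⟩ hx.2
  rwa [intervalIntegral.integral_const, smul_eq_mul] at h

theorem AntitoneOn.intervalIntegral_le_sub_mul {f : ℝ → ℝ} {a b : ℝ} (hab : a ≤ b)
    (hf : AntitoneOn f (Icc a b)) : ∫ x in a..b, f x ≤ (b - a) * f a := by
  have hf' : AntitoneOn f (uIcc a b) := by rwa [uIcc_of_le hab]
  have h := intervalIntegral.integral_mono_on hab
    (hf'.intervalIntegrable (μ := MeasureTheory.volume)) intervalIntegrable_const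
    fun x hx => hf ⟨le_rfl, hab⟩ hx hx.1
  rwa [intervalIntegral.integral_const, smul_eq_mul] at h

/-- An approximate Fatou coordinate of `x ↦ x * (1 - V x)`: it grows by about `1` per step. -/
noncomputable def approxFatouCoord (V : ℝ → ℝ) (x₀ x : ℝ) : ℝ :=
  ∫ u in x..x₀, (u * V u)⁻¹

section FatouCoord

variable {V : ℝ → ℝ} {x₀ x y r q : ℝ}

theorem antitoneOn_inv_mul_self_apply (hVmono : MonotoneOn V (Ioi 0)) (hVpos : ∀ x > 0, 0 < V x) :
    AntitoneOn (fun u => (u * V u)⁻¹) (Ioi 0) := fun u hu _ hv huv =>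
  inv_anti₀ (mul_pos hu (hVpos u hu)) (mul_le_mul huv (hVmono hu hv huv) (hVpos u hu).le hv.le)

theorem intervalIntegrable_inv_mul_self_apply (hVmono : MonotoneOn V (Ioi 0))
    (hVpos : ∀ x > 0, 0 < V x) (hx : 0 < x) (hy : 0 < y) :
    IntervalIntegrable (fun u => (u * V u)⁻¹) MeasureTheory.volume x y :=
  ((antitoneOn_inv_mul_self_apply hVmono hVpos).mono fun _ hu =>
    (lt_inf_iff.2 ⟨hx, hy⟩).trans_le hu.1).intervalIntegrable

theorem approxFatouCoord_eq_integral_add (hVmono : MonotoneOn V (Ioi 0))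
    (hVpos : ∀ x > 0, 0 < V x) (hx₀ : 0 < x₀) (hx : 0 < x) (hy : 0 < y) :
    approxFatouCoord V x₀ x = (∫ u in x..y, (u * V u)⁻¹) + approxFatouCoord V x₀ y :=
  (intervalIntegral.integral_add_adjacent_intervals
    (intervalIntegrable_inv_mul_self_apply hVmono hVpos hx hy)
    (intervalIntegrable_inv_mul_self_apply hVmono hVpos hy hx₀)).symm

theorem integral_inv_mul_self_apply_nonneg (hVpos : ∀ x > 0, 0 < V x) (hx : 0 < x)
    (hxy : x ≤ y) : 0 ≤ ∫ u in x..y, (u * V u)⁻¹ :=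
  intervalIntegral.integral_nonneg hxy fun u hu =>
    (inv_pos.2 (mul_pos (hx.trans_le hu.1) (hVpos u (hx.trans_le hu.1)))).le

theorem approxFatouCoord_nonneg (hVpos : ∀ x > 0, 0 < V x) (hx : 0 < x) (hx₀ : x ≤ x₀) :
    0 ≤ approxFatouCoord V x₀ x :=
  integral_inv_mul_self_apply_nonneg hVpos hx hx₀

theorem approxFatouCoord_antitoneOn (hVmono : MonotoneOn V (Ioi 0)) (hVpos : ∀ x > 0, 0 < V x)
    (hx₀ : 0 < x₀) : AntitoneOn (approxFatouCoord V x₀) (Ioi 0) := fun x hx y hy hxy => by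
  rw [approxFatouCoord_eq_integral_add hVmono hVpos hx₀ hx hy]
  exact le_add_of_nonneg_left (integral_inv_mul_self_apply_nonneg hVpos hx hxy)

theorem approxFatouCoord_mul_le (hVmono : MonotoneOn V (Ioi 0)) (hVpos : ∀ x > 0, 0 < V x)
    (hx : 0 < x) (hr : 1 ≤ r) (hrx : r * x ≤ x₀) (hq : V x ≤ q * V (r * x)) :
    approxFatouCoord V x₀ x * V x ≤ (r - 1) + q * (approxFatouCoord V x₀ (r * x) * V (r * x)) := by
  have hxrx : x ≤ r * x := le_mul_of_one_le_left hx.le hr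
  have hrx0 : 0 < r * x := hx.trans_le hxrx
  have hint : (∫ u in x..r * x, (u * V u)⁻¹) * V x ≤ r - 1 := by
    calc (∫ u in x..r * x, (u * V u)⁻¹) * V x ≤ (r * x - x) * (x * V x)⁻¹ * V x := by
          gcongr
          · exact (hVpos x hx).le
          · exact ((antitoneOn_inv_mul_self_apply hVmono hVpos).mono fun u hu =>
              hx.trans_le hu.1).intervalIntegral_le_sub_mul hxrx
      _ = r - 1 := by field_simp [(hVpos x hx).ne', hx.ne']
  have hG := approxFatouCoord_nonneg hVpos hrx0 hrx
  rw [approxFatouCoord_eq_integral_add hVmono hVpos (hrx0.trans_le hrx) hx hrx0, add_mul]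
  nlinarith [mul_le_mul_of_nonneg_left hq hG]

theorem mul_le_approxFatouCoord_mul (hVmono : MonotoneOn V (Ioi 0)) (hVpos : ∀ x > 0, 0 < V x)
    (hx : 0 < x) (hr : 1 ≤ r) (hrx : r * x ≤ x₀) (hq₀ : 0 ≤ q) (hq : q * V (r * x) ≤ V x) :
    q * ((r - 1) / r + approxFatouCoord V x₀ (r * x) * V (r * x)) ≤
      approxFatouCoord V x₀ x * V x := by
  have hxrx : x ≤ r * x := le_mul_of_one_le_left hx.le hr
  have hrx0 : 0 < r * x := hx.trans_le hxrx
  have hVrx := hVpos _ hrx0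
  have hint : q * ((r - 1) / r) ≤ (∫ u in x..r * x, (u * V u)⁻¹) * V x := by
    calc q * ((r - 1) / r) = (r * x - x) * (r * x * V (r * x))⁻¹ * (q * V (r * x)) := by
          field_simp [hVrx.ne', hx.ne', (zero_lt_one.trans_le hr).ne']
      _ ≤ (∫ u in x..r * x, (u * V u)⁻¹) * V x :=
          mul_le_mul (((antitoneOn_inv_mul_self_apply hVmono hVpos).mono fun u hu =>
              hx.trans_le hu.1).sub_mul_le_intervalIntegral hxrx) hq (mul_nonneg hq₀ hVrx.le)
            (integral_inv_mul_self_apply_nonneg hVpos hx hxrx)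
  have hG := approxFatouCoord_nonneg hVpos hrx0 hrx
  rw [approxFatouCoord_eq_integral_add hVmono hVpos (hrx0.trans_le hrx) hx hrx0, add_mul]
  nlinarith [mul_le_mul_of_nonneg_left hq hG]

end FatouCoord

theorem eventually_lt_of_le_add_mul_comp_mul {ψ : ℝ → ℝ} {A q r y₀ C η : ℝ} (hq₀ : 0 ≤ q)
    (hq₁ : q < 1) (hr : 1 < r) (hy₀ : 0 < y₀) (hrec : ∀ x ∈ Ioc 0 y₀, ψ x ≤ A + q * ψ (r * x))
    (htop : ∀ x ∈ Ioc y₀ (r * y₀), ψ x ≤ C) (hη : 0 < η) :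
    ∀ᶠ x in 𝓝[>] 0, ψ x < A / (1 - q) + η := by
  set D := A / (1 - q)
  set M := max (C - D) 0
  have hD : A + q * D = D := by
    simp only [D]
    field_simp [(sub_pos.2 hq₁).ne']
    ring
  -- on the `k`-th annulus `r ^ k * x ∈ (y₀, r * y₀]` the excess `ψ - D` is contracted by `q ^ k`
  have hann : ∀ k : ℕ, ∀ x, 0 < x → r ^ k * x ∈ Ioc y₀ (r * y₀) → ψ x - D ≤ q ^ k * M := by
    intro k
    induction k with
    | zero =>
      intro x _ hx
      rw [pow_zero, one_mul] at hx ⊢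
      exact (sub_le_sub_right (htop x hx) D).trans (le_max_left _ _)
    | succ k ih =>
      intro x hx hxk
      have hxy₀ : x ≤ y₀ := by
        have h : r * (r ^ k * x) ≤ r * y₀ := by rw [← mul_assoc, ← pow_succ']; exact hxk.2
        exact (le_mul_of_one_le_left hx.le (one_le_pow₀ hr.le)).trans
          (le_of_mul_le_mul_left h (zero_lt_one.trans hr))
      have hrx := ih (r * x) (by positivity) (by rwa [← mul_assoc, ← pow_succ])
      calc ψ x - D ≤ q * (ψ (r * x) - D) := by linarith [hrec x ⟨hx, hxy₀⟩]
        _ ≤ q * (q ^ k * M) := mul_le_mul_of_nonneg_left hrx hq₀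
        _ = q ^ (k + 1) * M := by ring
  obtain ⟨k₀, hk₀⟩ := (((tendsto_pow_atTop_nhds_zero_of_lt_one hq₀ hq₁).mul_const M).eventually
    (gt_mem_nhds (by rwa [zero_mul]))).exists
  have hr₀ : 0 < r := zero_lt_one.trans hr
  filter_upwards [Ioc_mem_nhdsGT (by positivity : (0:ℝ) < y₀ / r ^ k₀)] with x ⟨hx, hxk₀⟩
  obtain ⟨k, hk, hk'⟩ := exists_nat_pow_near ((one_le_div hx).2 (hxk₀.trans
    ((div_le_self hy₀.le (one_le_pow₀ hr.le)).trans (le_mul_of_one_le_left hy₀.le hr.le)))) hr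
  rw [le_div_iff₀ hx] at hk
  rw [div_lt_iff₀ hx, pow_succ', mul_assoc] at hk'
  have hkk₀ : k₀ ≤ k := by
    have h₁ : r ^ k₀ * x ≤ y₀ := by rwa [le_div_iff₀ (by positivity), mul_comm] at hxk₀
    have h₂ : y₀ < r ^ k * x := lt_of_mul_lt_mul_left hk' hr₀.le
    exact ((pow_lt_pow_iff_right₀ hr).1 (lt_of_mul_lt_mul_right (h₁.trans_lt h₂) hx.le)).le
  calc ψ x ≤ D + q ^ k * M := by linarith [hann k x hx ⟨lt_of_mul_lt_mul_left hk' hr₀.le, hk⟩]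
    _ ≤ D + q ^ k₀ * M := add_le_add_right (mul_le_mul_of_nonneg_right
      (pow_le_pow_of_le_one hq₀ hq₁.le hkk₀) (le_max_right _ _)) _
    _ < D + η := by linarith

theorem tendsto_sub_one_div_rpow_sub_one {τ : ℝ} (hτ : τ ≠ 0) :
    Tendsto (fun r : ℝ => (r - 1) / (r ^ τ - 1)) (𝓝[>] 1) (𝓝 τ⁻¹) := by
  have hderiv : HasDerivAt (· ^ τ) τ (1 : ℝ) := by
    simpa using Real.hasDerivAt_rpow_const (x := 1) (p := τ) (Or.inl one_ne_zero)
  refine ((hasDerivAt_iff_tendsto_slope.1 hderiv).inv₀ hτ).mono_left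
    (nhdsWithin_mono _ fun r hr => ne_of_gt hr) |>.congr fun r => ?_
  simp [slope_def_field]

theorem tendsto_rpow_nhdsGT_one (τ : ℝ) : Tendsto (· ^ τ) (𝓝[>] (1:ℝ)) (𝓝 1) := by
  simpa using (Real.continuousAt_rpow_const 1 τ (Or.inl one_ne_zero)).tendsto.mono_left
    nhdsWithin_le_nhds

section Karamata

variable {V : ℝ → ℝ} {σ x₀ : ℝ}

theorem eventually_approxFatouCoord_mul_lt (hV : RegVary0 V σ) (hVmono : MonotoneOn V (Ioi 0))
    (hVpos : ∀ x > 0, 0 < V x) (hx₀ : 0 < x₀) {τ b : ℝ} (hτ : 0 < τ) (hτσ : τ < σ)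
    (hb : τ⁻¹ < b) : ∀ᶠ x in 𝓝[>] 0, approxFatouCoord V x₀ x * V x < b := by
  have hlim : Tendsto (fun r : ℝ => (r - 1) / (1 - (r ^ τ)⁻¹)) (𝓝[>] 1) (𝓝 τ⁻¹) := by
    have h := (tendsto_sub_one_div_rpow_sub_one hτ.ne').mul (tendsto_rpow_nhdsGT_one τ)
    rw [mul_one] at h
    refine h.congr' (eventually_nhdsWithin_of_forall fun r (hr : 1 < r) => ?_)
    have hrτ : 1 < r ^ τ := Real.one_lt_rpow hr hτ
    field_simp [(sub_pos.2 hrτ).ne']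
  obtain ⟨r, hrb, hr : 1 < r⟩ := ((hlim.eventually (gt_mem_nhds hb)).and self_mem_nhdsWithin).exists
  have hr₀ : 0 < r := zero_lt_one.trans hr
  have hrτ : 1 < r ^ τ := Real.one_lt_rpow hr hτ
  obtain ⟨y₀, hy₀, hry₀, hratio⟩ := hV.exists_forall_Ioc_apply_mul_div_mem hr₀ hx₀
    (Ioi_mem_nhds (Real.rpow_lt_rpow_of_exponent_lt hr hτσ))
  have hG := approxFatouCoord_antitoneOn hVmono hVpos hx₀
  have hrec : ∀ x ∈ Ioc 0 y₀, approxFatouCoord V x₀ x * V x ≤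
      (r - 1) + (r ^ τ)⁻¹ * (approxFatouCoord V x₀ (r * x) * V (r * x)) := by
    rintro x ⟨hx, hxy₀⟩
    have h : r ^ τ * V x < V (r * x) := (lt_div_iff₀ (hVpos x hx)).1 (hratio x ⟨hx, hxy₀⟩)
    refine approxFatouCoord_mul_le hVmono hVpos hx hr.le
      ((mul_le_mul_of_nonneg_left hxy₀ hr₀.le).trans hry₀) ?_
    rw [inv_mul_eq_div, le_div_iff₀ (zero_lt_one.trans hrτ), mul_comm]
    exact h.le
  have htop : ∀ x ∈ Ioc y₀ (r * y₀),
      approxFatouCoord V x₀ x * V x ≤ approxFatouCoord V x₀ y₀ * V (r * y₀) := by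
    rintro x ⟨hx, hxy₀⟩
    have hx₀' : 0 < x := hy₀.trans hx
    exact mul_le_mul (hG hy₀ hx₀' hx.le) (hVmono hx₀' (mul_pos hr₀ hy₀) hxy₀) (hVpos x hx₀').le
      (approxFatouCoord_nonneg hVpos hy₀ ((le_mul_of_one_le_left hy₀.le hr.le).trans hry₀))
  filter_upwards [eventually_lt_of_le_add_mul_comp_mul (ψ := fun x => approxFatouCoord V x₀ x * V x)
    (inv_nonneg.2 (zero_le_one.trans hrτ.le)) (inv_lt_one_of_one_lt₀ hrτ) hr hy₀ hrec htop
    (sub_pos.2 hrb)] with x hx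
  linarith

theorem eventually_lt_approxFatouCoord_mul (hV : RegVary0 V σ) (hVmono : MonotoneOn V (Ioi 0))
    (hVpos : ∀ x > 0, 0 < V x) (hx₀ : 0 < x₀) {τ a : ℝ} (hτ : 0 < τ) (hστ : σ < τ)
    (ha : a < τ⁻¹) : ∀ᶠ x in 𝓝[>] 0, a < approxFatouCoord V x₀ x * V x := by
  have hlim : Tendsto (fun r : ℝ => (r ^ τ)⁻¹ * ((r - 1) / r) / (1 - (r ^ τ)⁻¹)) (𝓝[>] 1)
      (𝓝 τ⁻¹) := by
    have h := (tendsto_sub_one_div_rpow_sub_one hτ.ne').div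
      (tendsto_id.mono_left nhdsWithin_le_nhds) one_ne_zero
    rw [div_one] at h
    refine h.congr' (eventually_nhdsWithin_of_forall fun r (hr : 1 < r) => ?_)
    have hrτ : 1 < r ^ τ := Real.one_lt_rpow hr hτ
    simp only [Pi.div_apply, id]
    field_simp [(sub_pos.2 hrτ).ne', (zero_lt_one.trans hr).ne']
  obtain ⟨r, hra, hr : 1 < r⟩ := ((hlim.eventually (lt_mem_nhds ha)).and self_mem_nhdsWithin).exists
  have hr₀ : 0 < r := zero_lt_one.trans hr
  have hrτ : 1 < r ^ τ := Real.one_lt_rpow hr hτ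
  obtain ⟨y₀, hy₀, hry₀, hratio⟩ := hV.exists_forall_Ioc_apply_mul_div_mem hr₀ hx₀
    (Iio_mem_nhds (Real.rpow_lt_rpow_of_exponent_lt hr hστ))
  have hrec : ∀ x ∈ Ioc 0 y₀, -(approxFatouCoord V x₀ x * V x) ≤
      -((r ^ τ)⁻¹ * ((r - 1) / r)) + (r ^ τ)⁻¹ * -(approxFatouCoord V x₀ (r * x) * V (r * x)) := by
    rintro x ⟨hx, hxy₀⟩
    have h : V (r * x) < r ^ τ * V x := (div_lt_iff₀ (hVpos x hx)).1 (hratio x ⟨hx, hxy₀⟩)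
    have h' := mul_le_approxFatouCoord_mul hVmono hVpos hx hr.le
      ((mul_le_mul_of_nonneg_left hxy₀ hr₀.le).trans hry₀)
      (inv_nonneg.2 (zero_le_one.trans hrτ.le)) (q := (r ^ τ)⁻¹)
      (by rw [inv_mul_eq_div, div_le_iff₀' (zero_lt_one.trans hrτ)]; exact h.le)
    linarith
  have htop : ∀ x ∈ Ioc y₀ (r * y₀), -(approxFatouCoord V x₀ x * V x) ≤ 0 := by
    rintro x ⟨hx, hxy₀⟩
    have hx₀' : 0 < x := hy₀.trans hx
    exact neg_nonpos.2 (mul_nonneg (approxFatouCoord_nonneg hVpos hx₀' (hxy₀.trans hry₀))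
      (hVpos x hx₀').le)
  filter_upwards [eventually_lt_of_le_add_mul_comp_mul
    (ψ := fun x => -(approxFatouCoord V x₀ x * V x))
    (inv_nonneg.2 (zero_le_one.trans hrτ.le)) (inv_lt_one_of_one_lt₀ hrτ) hr hy₀ hrec htop
    (sub_pos.2 hra)] with x hx
  rw [neg_div] at hx
  linarith

theorem tendsto_approxFatouCoord_mul (hV : RegVary0 V σ) (hσ : 0 < σ)
    (hVmono : MonotoneOn V (Ioi 0)) (hVpos : ∀ x > 0, 0 < V x) (hx₀ : 0 < x₀) :
    Tendsto (fun x => approxFatouCoord V x₀ x * V x) (𝓝[>] 0) (𝓝 σ⁻¹) := by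
  have hinv : Tendsto (·⁻¹) (𝓝 σ) (𝓝 σ⁻¹) := tendsto_inv₀ hσ.ne'
  refine tendsto_order.2 ⟨fun a ha => ?_, fun b hb => ?_⟩
  · obtain ⟨τ, haτ, hστ : σ < τ⟩ := (((hinv.eventually (lt_mem_nhds ha)).filter_mono
      nhdsWithin_le_nhds).and self_mem_nhdsWithin).exists (f := 𝓝[>] σ)
    exact eventually_lt_approxFatouCoord_mul hV hVmono hVpos hx₀ (hσ.trans hστ) hστ haτ
  · obtain ⟨τ, ⟨hτb, hτ⟩, hτσ : τ < σ⟩ := ((((hinv.eventually (gt_mem_nhds hb)).and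
      (lt_mem_nhds hσ)).filter_mono nhdsWithin_le_nhds).and self_mem_nhdsWithin).exists
      (f := 𝓝[<] σ)
    exact eventually_approxFatouCoord_mul_lt hV hVmono hVpos hx₀ hτ hτσ hτb

end Karamata

section Orbit

variable {V : ℝ → ℝ} {σ : ℝ} {w : ℕ → ℝ}

theorem tendsto_orbit_nhdsGT_zero (hVcont : ContinuousOn V (Ioi 0)) (hVpos : ∀ x > 0, 0 < V x)
    (hw : ∀ n, w (n + 1) = w n * (1 - V (w n))) (hwpos : ∀ n, 0 < w n) :
    Tendsto w atTop (𝓝[>] 0) := by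
  have hanti : Antitone w := antitone_nat_of_succ_le fun n => by
    rw [hw n]
    nlinarith [hVpos _ (hwpos n), hwpos n]
  have hL := tendsto_atTop_ciInf hanti ⟨0, by rintro _ ⟨n, rfl⟩; exact (hwpos n).le⟩
  set L := ⨅ n, w n
  have hL0 : L = 0 := by
    refine ((ge_of_tendsto' hL fun n => (hwpos n).le).eq_or_lt.resolve_right fun hL0 => ?_).symm
    have hstep : Tendsto (fun n => w n * (1 - V (w n))) atTop (𝓝 (L * (1 - V L))) :=
      hL.mul (tendsto_const_nhds.sub ((hVcont.continuousAt (Ioi_mem_nhds hL0)).tendsto.comp hL))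
    have hfix : L = L * (1 - V L) :=
      tendsto_nhds_unique (hL.comp (tendsto_add_atTop_nat 1)) (hstep.congr fun n => (hw n).symm)
    nlinarith [hVpos L hL0]
  rw [hL0] at hL
  exact tendsto_nhdsWithin_iff.2 ⟨hL, Eventually.of_forall hwpos⟩

theorem tendsto_integral_orbit_step (hV : RegVary0 V σ) (hVmono : MonotoneOn V (Ioi 0))
    (hVpos : ∀ x > 0, 0 < V x) (hw : ∀ n, w (n + 1) = w n * (1 - V (w n)))
    (hwpos : ∀ n, 0 < w n) (hwlim : Tendsto w atTop (𝓝[>] 0))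
    (hVw : Tendsto (fun n => V (w n)) atTop (𝓝 0)) :
    Tendsto (fun n => ∫ u in w (n + 1)..w n, (u * V u)⁻¹) atTop (𝓝 1) := by
  have hgap : ∀ n, w n - w (n + 1) = w n * V (w n) := fun n => by rw [hw n]; ring
  have hle : ∀ n, w (n + 1) ≤ w n := fun n => by
    nlinarith [hgap n, hwpos n, hVpos _ (hwpos n)]
  have hanti : ∀ n, AntitoneOn (fun u => (u * V u)⁻¹) (Icc (w (n + 1)) (w n)) := fun n =>
    (antitoneOn_inv_mul_self_apply hVmono hVpos).mono fun u hu => (hwpos _).trans_le hu.1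
  have hlow : ∀ n, 1 ≤ ∫ u in w (n + 1)..w n, (u * V u)⁻¹ := fun n => by
    have h := (hanti n).sub_mul_le_intervalIntegral (hle n)
    rwa [hgap n, mul_inv_cancel₀ (mul_pos (hwpos n) (hVpos _ (hwpos n))).ne'] at h
  have hup : ∀ n, ∫ u in w (n + 1)..w n, (u * V u)⁻¹ ≤
      (w (n + 1) / w n * (V (w (n + 1)) / V (w n)))⁻¹ := fun n => by
    have h := (hanti n).intervalIntegral_le_sub_mul (hle n)
    have hVn := hVpos _ (hwpos n)
    have hVn' := hVpos _ (hwpos (n + 1))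
    convert h using 1
    rw [hgap n]
    field_simp [(hwpos n).ne', (hwpos (n + 1)).ne', hVn.ne', hVn'.ne']
  have hone_sub : Tendsto (fun n => 1 - V (w n)) atTop (𝓝 1) := by
    simpa using tendsto_const_nhds.sub hVw
  have hratio_w : Tendsto (fun n => w (n + 1) / w n) atTop (𝓝 1) :=
    hone_sub.congr fun n => by rw [hw n, mul_div_cancel_left₀ _ (hwpos n).ne']
  have hratio_V : Tendsto (fun n => V (w (n + 1)) / V (w n)) atTop (𝓝 1) := by
    have h := hV.tendsto_apply_mul_div hVmono hVpos one_pos hwlim hone_sub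
    rw [Real.one_rpow] at h
    exact h.congr fun n => by rw [hw n, mul_comm]
  have hupper := ((hratio_w.mul hratio_V).inv₀ (by norm_num))
  rw [mul_one, inv_one] at hupper
  exact tendsto_of_tendsto_of_tendsto_of_le_of_le tendsto_const_nhds hupper hlow hup

theorem approxFatouCoord_orbit_eq_sum (hVmono : MonotoneOn V (Ioi 0))
    (hVpos : ∀ x > 0, 0 < V x) (hwpos : ∀ n, 0 < w n) (n : ℕ) :
    approxFatouCoord V (w 0) (w n) =
      ∑ k ∈ Finset.range n, ∫ u in w (k + 1)..w k, (u * V u)⁻¹ := by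
  rw [approxFatouCoord, intervalIntegral.integral_symm,
    ← intervalIntegral.sum_integral_adjacent_intervals fun k _ =>
      intervalIntegrable_inv_mul_self_apply hVmono hVpos (hwpos k) (hwpos (k + 1)),
    ← Finset.sum_neg_distrib]
  simp only [intervalIntegral.integral_symm (w (_ + 1)), neg_neg]

theorem tendsto_natCast_mul_apply_orbit (hV : RegVary0 V σ) (hσ : 0 < σ)
    (hVcont : ContinuousOn V (Ioi 0)) (hVmono : MonotoneOn V (Ioi 0)) (hVpos : ∀ x > 0, 0 < V x)
    (hVlim : Tendsto V (𝓝[>] 0) (𝓝 0)) (hw : ∀ n, w (n + 1) = w n * (1 - V (w n)))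
    (hwpos : ∀ n, 0 < w n) : Tendsto (fun n : ℕ => (n : ℝ) * V (w n)) atTop (𝓝 σ⁻¹) := by
  have hwlim := tendsto_orbit_nhdsGT_zero hVcont hVpos hw hwpos
  have hVw : Tendsto (fun n => V (w n)) atTop (𝓝 0) := hVlim.comp hwlim
  set G := approxFatouCoord V (w 0)
  have hces : Tendsto (fun n : ℕ => (n : ℝ)⁻¹ * G (w n)) atTop (𝓝 1) := by
    simpa only [G, approxFatouCoord_orbit_eq_sum hVmono hVpos hwpos] using
      (tendsto_integral_orbit_step hV hVmono hVpos hw hwpos hwlim hVw).cesaro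
  have hkar : Tendsto (fun n => G (w n) * V (w n)) atTop (𝓝 σ⁻¹) :=
    (tendsto_approxFatouCoord_mul hV hσ hVmono hVpos (hwpos 0)).comp hwlim
  have h := hkar.div hces one_ne_zero
  rw [div_one] at h
  refine h.congr' ?_
  filter_upwards [hces.eventually (lt_mem_nhds one_pos)] with n hn
  have hG : G (w n) ≠ 0 := fun h0 => by simp [h0] at hn
  have hn0 : (n : ℝ) ≠ 0 := fun h0 => by simp [h0] at hn
  simp only [Pi.div_apply]
  field_simp

end Orbit

theorem orbit_mem_Ioc {T : ℝ → ℝ} {w : ℕ → ℝ} {c : ℝ} (hT : ∀ x ∈ Ioc 0 c, T x ∈ Ioc 0 x)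
    (hw0 : w 0 ∈ Ioc 0 c) (hw : ∀ n, w (n + 1) = T (w n)) : ∀ n, w n ∈ Ioc 0 (w 0)
  | 0 => ⟨hw0.1, le_rfl⟩
  | n + 1 => by
    have hn := orbit_mem_Ioc hT hw0 hw n
    have hTn := hT (w n) ⟨hn.1, hn.2.trans hw0.2⟩
    rw [hw n]
    exact ⟨hTn.1, hTn.2.trans hn.2⟩

theorem orbit_pos_and_eq_mul_one_sub {T V : ℝ → ℝ} {ε : ℝ} {w : ℕ → ℝ}
    (hVrange : ∀ x > (0:ℝ), V x ∈ Ioo (0:ℝ) 1) (hT : ∀ x ∈ Ico (0:ℝ) ε, T x = x * (1 - V x))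
    (hw0 : w 0 ∈ Ioo 0 ε) (hwT : ∀ n, w (n + 1) = T (w n)) :
    (∀ n, 0 < w n) ∧ ∀ n, w (n + 1) = w n * (1 - V (w n)) := by
  have hTmaps : ∀ x ∈ Ioc 0 (w 0), T x ∈ Ioc 0 x := fun x ⟨hx, hxw⟩ => by
    rw [hT x ⟨hx.le, hxw.trans_lt hw0.2⟩]
    obtain ⟨hV₀, hV₁⟩ := hVrange x hx
    exact ⟨mul_pos hx (sub_pos.2 hV₁), mul_le_of_le_one_right hx.le (by linarith)⟩
  have hwmem := orbit_mem_Ioc hTmaps ⟨hw0.1, le_rfl⟩ hwT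
  exact ⟨fun n => (hwmem n).1, fun n => by
    rw [hwT, hT _ ⟨(hwmem n).1.le, (hwmem n).2.trans_lt hw0.2⟩]⟩

theorem exists_tendsto_apply_eq_inv_natCast {V : ℝ → ℝ} (hV0 : V 0 = 0)
    (hVcont : ContinuousOn V (Ici 0)) (hVmono : MonotoneOn V (Ioi 0)) (hVpos : ∀ x > 0, 0 < V x) :
    ∃ y : ℕ → ℝ, Tendsto y atTop (𝓝[>] 0) ∧ ∀ᶠ n : ℕ in atTop, V (y n) = (n : ℝ)⁻¹ := by
  have hsmall : ∀ {η : ℝ}, 0 < η → ∀ᶠ n : ℕ in atTop, (n : ℝ)⁻¹ < V η := fun hη =>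
    (tendsto_inv_atTop_zero.comp tendsto_natCast_atTop_atTop).eventually
      (gt_mem_nhds (hVpos _ hη))
  have hex : ∀ n : ℕ, ∃ y, (n : ℝ)⁻¹ ∈ Ioo (V 0) (V 1) → y ∈ Ioo 0 1 ∧ V y = (n : ℝ)⁻¹ := by
    intro n
    by_cases hn : (n : ℝ)⁻¹ ∈ Ioo (V 0) (V 1)
    · obtain ⟨y, hy, hVy⟩ :=
        intermediate_value_Ioo zero_le_one (hVcont.mono Icc_subset_Ici_self) hn
      exact ⟨y, fun _ => ⟨hy, hVy⟩⟩
    · exact ⟨0, fun h => absurd h hn⟩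
  choose y hy using hex
  have hev : ∀ᶠ n : ℕ in atTop, (n : ℝ)⁻¹ ∈ Ioo (V 0) (V 1) := by
    filter_upwards [hsmall one_pos, eventually_gt_atTop 0] with n h1 hn
    rw [hV0]
    exact ⟨by positivity, h1⟩
  refine ⟨y, tendsto_nhdsWithin_iff.2 ⟨tendsto_order.2 ⟨fun a ha => ?_, fun η hη => ?_⟩,
    hev.mono fun n hn => (hy n hn).1.1⟩, hev.mono fun n hn => (hy n hn).2⟩
  · exact hev.mono fun n hn => ha.trans (hy n hn).1.1
  · filter_upwards [hev, hsmall hη] with n hn hnη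
    by_contra! h
    exact hnη.not_ge ((hy n hn).2 ▸ hVmono hη (hη.trans_le h) h)

theorem orbit_gap_asymptotics
    (T V b : ℝ → ℝ) (σ : ℝ) (hσ : 0 < σ)
    (hVcont : ContinuousOn V (Ici 0)) (hVmono : StrictMonoOn V (Ici 0))
    (hVrange : ∀ x > (0:ℝ), V x ∈ Ioo (0:ℝ) 1)
    (hVreg : RegVary0 V σ)
    (hloc : ∃ ε > (0:ℝ), InjOn T (Ico 0 ε) ∧ ∀ x ∈ Ico (0:ℝ) ε, T x = x * (1 - V x))
    (hb : ∀ x > (0:ℝ), b (1 / V (1 / x)) = x) :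
    ∃ δ > (0:ℝ), ∀ w : ℕ → ℝ, w 0 ∈ Ioo 0 δ → (∀ n, w (n + 1) = T (w n)) →
      Tendsto (fun n : ℕ => |w n - w (n + 1)| * (σ ^ (1 + 1 / σ) * n * b n)) atTop (𝓝 1) := by
  obtain ⟨ε, hε, -, hT⟩ := hloc
  have hVpos : ∀ x > 0, 0 < V x := fun x hx => (hVrange x hx).1
  have hVmono' : MonotoneOn V (Ioi 0) := hVmono.monotoneOn.mono Ioi_subset_Ici_self
  have hV0 : V 0 = 0 := hVreg.apply_zero hσ (hVcont 0 self_mem_Ici)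
  have hVlim : Tendsto V (𝓝[>] 0) (𝓝 0) := by
    have h := (hVcont 0 self_mem_Ici).tendsto.mono_left (nhdsWithin_mono _ Ioi_subset_Ici_self)
    rwa [hV0] at h
  obtain ⟨y, hy, hVy⟩ := exists_tendsto_apply_eq_inv_natCast hV0 hVcont hVmono' hVpos
  have hby : ∀ᶠ n : ℕ in atTop, b n = (y n)⁻¹ := by
    filter_upwards [hVy, hy.eventually self_mem_nhdsWithin] with n hn hyn
    simpa only [one_div, inv_inv, hn] using hb (y n)⁻¹ (inv_pos.2 hyn)
  refine ⟨ε, hε, fun w hw0 hwT => ?_⟩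
  obtain ⟨hwpos, hw⟩ := orbit_pos_and_eq_mul_one_sub hVrange hT hw0 hwT
  have hnV := tendsto_natCast_mul_apply_orbit hVreg hσ (hVcont.mono Ioi_subset_Ici_self) hVmono'
    hVpos hVlim hw hwpos
  have hwy : Tendsto (fun n => w n / y n) atTop (𝓝 (σ⁻¹ ^ σ⁻¹)) :=
    hVreg.tendsto_div_of_tendsto_apply_div hσ hVmono' hVpos (inv_pos.2 hσ) hy
      (Eventually.of_forall hwpos) (hnV.congr' (hVy.mono fun n hn => by
        show (n : ℝ) * V (w n) = V (w n) / V (y n)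
        rw [hn, div_inv_eq_mul, mul_comm]))
  have hconst : σ⁻¹ ^ σ⁻¹ * σ⁻¹ * σ ^ (1 + 1 / σ) = 1 := by
    rw [Real.inv_rpow hσ.le, Real.rpow_add hσ, Real.rpow_one, one_div]
    field_simp
  have hlim := (hwy.mul hnV).mul_const (σ ^ (1 + 1 / σ))
  rw [hconst] at hlim
  refine hlim.congr' (hby.mono fun n hn => ?_)
  dsimp only
  rw [hn, show w n - w (n + 1) = w n * V (w n) by rw [hw n]; ring,
    abs_of_pos (mul_pos (hwpos n) (hVpos _ (hwpos n)))]
  ring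
end

section
/- Let s ∈ (0,1), let T_s(x) = x(1 + x^s) mod 1 be the Manneville–Pomeau map, let c ∈ (0,1) be the unique point with T_s(c) = 1, and let U_s : [0,1] → [0,c] be the inverse of the diffeomorphism T_s|_{[0,c]} : [0,c] → [0,1]. Write U_s(x) = x(1 − V(x)). Then: (i) 0 ≤ V(x) ≤ 1 − c for all x; (ii) V(x) = x^s(1 − V(x))^{s+1} for all x ≠ 0, hence lim_{x→0} V(x) = 0; (iii) lim_{x→0} V(tx)/V(x) = t^s for all t > 0, i.e. V is regularly varying at 0 with index s; and (iv) lim_{x→0} x^s/V(x) = 1. -/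
open Set Filter Topology Real

theorem manneville_pomeau_inverse_branch_properties
    (s : ℝ) (hs : s ∈ Ioo (0:ℝ) 1)
    (c : ℝ) (hc : c ∈ Ioo (0:ℝ) 1) (hc1 : c * (1 + c ^ s) = 1)
    (hcuniq : ∀ c' ∈ Ioo (0:ℝ) 1, c' * (1 + c' ^ s) = 1 → c' = c)
    (U V : ℝ → ℝ)
    (hUmaps : MapsTo U (Icc 0 1) (Icc 0 c))
    (hTU : ∀ x ∈ Icc (0:ℝ) 1, U x * (1 + U x ^ s) = x)
    (hUT : ∀ x ∈ Icc (0:ℝ) c, U (x * (1 + x ^ s)) = x)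
    (hV : ∀ x ∈ Icc (0:ℝ) 1, U x = x * (1 - V x)) :
    (∀ x ∈ Ioc (0:ℝ) 1, 0 ≤ V x ∧ V x ≤ 1 - c) ∧
    (∀ x ∈ Ioc (0:ℝ) 1, V x = x ^ s * (1 - V x) ^ (s + 1)) ∧
    Tendsto V (𝓝[>] 0) (𝓝 0) ∧
    (∀ t > (0:ℝ), Tendsto (fun x => V (t * x) / V x) (𝓝[>] 0) (𝓝 (t ^ s))) ∧
    Tendsto (fun x => x ^ s / V x) (𝓝[>] 0) (𝓝 1) := by
  obtain ⟨hs0, hs1⟩ := hs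
  obtain ⟨hc0, hcl1⟩ := hc
  have key : ∀ x ∈ Ioc (0:ℝ) 1, 0 ≤ V x ∧ V x ≤ 1 - c ∧
      V x = x ^ s * (1 - V x) ^ (s + 1) ∧ 0 < V x ∧ V x ≤ x ^ s := by
    intro x hx
    obtain ⟨hx0, hx1⟩ := hx
    have hxm : x ∈ Icc (0:ℝ) 1 := ⟨hx0.le, hx1⟩
    have hU := hTU x hxm
    have hUi := hUmaps hxm
    have hVx := hV x hxm
    have hu0 : 0 ≤ U x := hUi.1
    have huc : U x ≤ c := hUi.2
    have hps : 0 ≤ U x ^ s := rpow_nonneg hu0 s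
    have hux : U x ≤ x := by nlinarith
    have hcs : U x ^ s ≤ c ^ s := rpow_le_rpow hu0 huc hs0.le
    have hcx : c * x ≤ U x := by nlinarith [mul_le_mul_of_nonneg_left hcs (mul_nonneg hc0.le hu0)]
    have h1c : c ≤ 1 - V x := le_of_mul_le_mul_left (by linarith [hVx]) hx0
    have hV1 : 1 - V x ≤ 1 := le_of_mul_le_mul_left (by rw [mul_one]; linarith [hVx]) hx0
    have hone : 0 < 1 - V x := lt_of_lt_of_le hc0 h1c
    have hVnn : 0 ≤ V x := by linarith
    rw [hVx] at hU
    rw [mul_rpow hx0.le hone.le] at hU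
    have hrp : (1 - V x) ^ (s + 1) = (1 - V x) ^ s * (1 - V x) := rpow_add_one hone.ne' s
    have heq : V x = x ^ s * (1 - V x) ^ (s + 1) := by
      rw [hrp]
      have h4 : x * V x = x * (x ^ s * ((1 - V x) ^ s * (1 - V x))) := by
        linear_combination -hU
      have := mul_left_cancel₀ hx0.ne' h4
      linarith [this]
    have hVpos : 0 < V x := by
      rw [heq]
      exact mul_pos (rpow_pos_of_pos hx0 s) (rpow_pos_of_pos hone (s + 1))
    have hVle : V x ≤ x ^ s := by
      have hb : (1 - V x) ^ (s + 1) ≤ 1 := rpow_le_one hone.le hV1 (by linarith)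
      calc V x = x ^ s * (1 - V x) ^ (s + 1) := heq
        _ ≤ x ^ s * 1 := by
            exact mul_le_mul_of_nonneg_left hb (rpow_nonneg hx0.le s)
        _ = x ^ s := mul_one _
    exact ⟨hVnn, by linarith, heq, hVpos, hVle⟩
  have hmem : Ioc (0:ℝ) 1 ∈ 𝓝[>] (0:ℝ) :=
    mem_of_superset (Ioo_mem_nhdsGT_of_mem ⟨le_refl 0, one_pos⟩) Ioo_subset_Ioc_self
  have hxs : Tendsto (fun x : ℝ => x ^ s) (𝓝[>] (0:ℝ)) (𝓝 0) := by
    have h := (Real.continuousAt_rpow_const 0 s (Or.inr hs0.le)).tendsto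
    rw [Real.zero_rpow hs0.ne'] at h
    exact h.mono_left nhdsWithin_le_nhds
  have hVt : Tendsto V (𝓝[>] (0:ℝ)) (𝓝 0) := by
    apply tendsto_of_tendsto_of_tendsto_of_le_of_le' tendsto_const_nhds hxs
    · filter_upwards [hmem] with x hx using (key x hx).1
    · filter_upwards [hmem] with x hx using (key x hx).2.2.2.2
  have hG : Tendsto (fun x => x ^ s / V x) (𝓝[>] (0:ℝ)) (𝓝 1) := by
    have h1 : ContinuousAt (fun v : ℝ => (1 - v) ^ (s + 1)) 0 :=
      ContinuousAt.rpow_const (continuousAt_const.sub continuousAt_id) (Or.inr (by linarith : (0:ℝ) ≤ s + 1))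
    have h2 : ContinuousAt (fun v : ℝ => 1 / (1 - v) ^ (s + 1)) 0 := by
      apply ContinuousAt.div continuousAt_const h1
      norm_num
    have h3 : Tendsto ((fun v : ℝ => 1 / (1 - v) ^ (s + 1)) ∘ V) (𝓝[>] (0:ℝ)) (𝓝 1) := by
      have := h2.tendsto.comp hVt
      simpa using this
    apply h3.congr'
    filter_upwards [hmem] with x hx
    obtain ⟨_, _, heq, hVpos, _⟩ := key x hx
    have hone : 0 < 1 - V x := by
      rcases key x hx with ⟨_, hle, _, _, _⟩
      linarith [hc0]
    have hB : (0:ℝ) < (1 - V x) ^ (s + 1) := rpow_pos_of_pos hone (s + 1)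
    show (1:ℝ) / (1 - V x) ^ (s + 1) = x ^ s / V x
    have hxsp : (0:ℝ) < x ^ s := rpow_pos_of_pos hx.1 s
    conv_rhs => rw [heq]
    rw [div_mul_eq_div_div, div_self hxsp.ne']
  refine ⟨fun x hx => ⟨(key x hx).1, (key x hx).2.1⟩, fun x hx => (key x hx).2.2.1, hVt, ?_, hG⟩
  intro t ht
  have htmul : Tendsto (fun x : ℝ => t * x) (𝓝[>] (0:ℝ)) (𝓝[>] (0:ℝ)) := by
    apply tendsto_nhdsWithin_of_tendsto_nhds_of_eventually_within
    · have h1 : Tendsto (fun x : ℝ => t * x) (𝓝 0) (𝓝 (t * 0)) :=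
        (continuous_const.mul continuous_id).tendsto 0
      rw [mul_zero] at h1
      exact h1.mono_left nhdsWithin_le_nhds
    · filter_upwards [eventually_mem_nhdsWithin] with x hx
      exact mul_pos ht hx
  have hlim : Tendsto (fun x => t ^ s * (x ^ s / V x) / ((t * x) ^ s / V (t * x)))
      (𝓝[>] (0:ℝ)) (𝓝 (t ^ s)) := by
    have h5 : Tendsto (fun x => t ^ s * (x ^ s / V x)) (𝓝[>] (0:ℝ)) (𝓝 (t ^ s * 1)) :=
      hG.const_mul _
    have h6 := h5.div (hG.comp htmul) one_ne_zero
    simp only [mul_one, div_one] at h6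
    exact h6
  apply hlim.congr'
  have hS : Ioo (0:ℝ) (min 1 t⁻¹) ∈ 𝓝[>] (0:ℝ) :=
    Ioo_mem_nhdsGT_of_mem ⟨le_refl 0, lt_min one_pos (inv_pos.mpr ht)⟩
  filter_upwards [hS] with x hx
  obtain ⟨hx0, hxlt⟩ := hx
  have hx1 : x ≤ 1 := le_of_lt (lt_of_lt_of_le hxlt (min_le_left _ _))
  have htx0 : 0 < t * x := mul_pos ht hx0
  have htx1 : t * x ≤ 1 := by
    have : x < t⁻¹ := lt_of_lt_of_le hxlt (min_le_right _ _)
    calc t * x ≤ t * t⁻¹ := mul_le_mul_of_nonneg_left this.le ht.le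
      _ = 1 := mul_inv_cancel₀ ht.ne'
  obtain ⟨_, _, _, hVpos, _⟩ := key x ⟨hx0, hx1⟩
  obtain ⟨_, _, _, hVtpos, _⟩ := key (t * x) ⟨htx0, htx1⟩
  have hxs0 : (0:ℝ) < x ^ s := rpow_pos_of_pos hx0 s
  have htxs0 : (0:ℝ) < (t * x) ^ s := rpow_pos_of_pos htx0 s
  have hmulr : (t * x) ^ s = t ^ s * x ^ s := mul_rpow ht.le hx0.le
  rw [hmulr]
  field_simp
end

section
/- Let V : [0,∞) → [0,1) be continuous and increasing with V(x) > 0 for x > 0, and let ω be a modulus of continuity. Suppose there exist constants γ > 0, ξ₀ > 1 and η₀ ∈ (0,1) such that ω(ξh)/V(ξh) ≥ ξ^γ · ω(h)/V(h) for all h ∈ (0,η₀) and all ξ ∈ (1,ξ₀]. Then lim_{h→0} ω(h)/V(h) = 0. -/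
open Set Filter Topology Real

theorem assumptionA_implies_limit_zero
    (V ω : ℝ → ℝ)
    (hVcont : ContinuousOn V (Ici 0)) (hVmono : StrictMonoOn V (Ici 0))
    (hVrange : ∀ x ∈ Ici (0:ℝ), 0 ≤ V x ∧ V x < 1) (hVpos : ∀ x > (0:ℝ), 0 < V x)
    (hωcont : ContinuousOn ω (Ici 0)) (hωmono : MonotoneOn ω (Ici 0))
    (hω0 : ω 0 = 0) (hωnn : ∀ x, 0 ≤ x → 0 ≤ ω x)
    (γ ξ₀ η₀ : ℝ) (hγ : 0 < γ) (hξ₀ : 1 < ξ₀) (hη₀ : η₀ ∈ Ioo (0:ℝ) 1)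
    (hA : ∀ h ∈ Ioo (0:ℝ) η₀, ∀ ξ ∈ Ioc (1:ℝ) ξ₀,
      ξ ^ γ * (ω h / V h) ≤ ω (ξ * h) / V (ξ * h)) :
    Tendsto (fun h => ω h / V h) (𝓝[>] 0) (𝓝 0) := by
  obtain ⟨hη0, hη1⟩ := hη₀
  have hξ1 : (0:ℝ) < ξ₀ := lt_trans one_pos hξ₀
  have hVq : 0 < V (η₀ / ξ₀) := hVpos _ (div_pos hη0 hξ1)
  set M : ℝ := ω η₀ / V (η₀ / ξ₀) with hM
  have hMnn : 0 ≤ M := div_nonneg (hωnn η₀ hη0.le) hVq.le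
  have hr1 : 1 < ξ₀ ^ γ := Real.one_lt_rpow_iff_of_pos hξ1 |>.2 (Or.inl ⟨hξ₀, hγ⟩)
  have hrpos : (0:ℝ) < ξ₀ ^ γ := lt_trans one_pos hr1
  have eq1 : ∀ k : ℕ, ξ₀ * (η₀ / ξ₀ ^ (k + 1)) = η₀ / ξ₀ ^ k := by
    intro k
    field_simp
    ring
  have key : ∀ n : ℕ, ∀ h : ℝ, η₀ / ξ₀ ^ (n + 1) < h → h ≤ η₀ / ξ₀ ^ n →
      ω h / V h ≤ M / (ξ₀ ^ γ) ^ n := by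
    intro n
    induction n with
    | zero =>
      intro h h1 h2
      simp only [pow_zero, zero_add, pow_one, div_one] at h1 h2 ⊢
      have hpos : 0 < h := lt_trans (div_pos hη0 hξ1) h1
      exact div_le_div₀ (hωnn η₀ hη0.le)
        (hωmono (mem_Ici.2 hpos.le) (mem_Ici.2 hη0.le) h2) hVq
        (hVmono.monotoneOn (mem_Ici.2 (div_pos hη0 hξ1).le) (mem_Ici.2 hpos.le) h1.le)
    | succ n ih =>
      intro h h1 h2
      have hpos : 0 < h := lt_trans (div_pos hη0 (pow_pos hξ1 _)) h1
      have hξpow : (1:ℝ) < ξ₀ ^ (n + 1) := one_lt_pow₀ hξ₀ (Nat.succ_ne_zero n)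
      have hhη : h < η₀ := lt_of_le_of_lt h2 (div_lt_self hη0 hξpow)
      have hAh := hA h ⟨hpos, hhη⟩ ξ₀ ⟨hξ₀, le_refl ξ₀⟩
      have hbound : ω (ξ₀ * h) / V (ξ₀ * h) ≤ M / (ξ₀ ^ γ) ^ n := by
        apply ih
        · rw [← eq1 (n + 1)]
          exact mul_lt_mul_of_pos_left h1 hξ1
        · rw [← eq1 n]
          exact mul_le_mul_of_nonneg_left h2 hξ1.le
      rw [pow_succ, ← div_div, le_div_iff₀ hrpos, mul_comm]
      exact le_trans hAh hbound
  rw [Metric.tendsto_nhdsWithin_nhds]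
  intro ε hε
  obtain ⟨n, hn⟩ := pow_unbounded_of_one_lt (M / ε) hr1
  refine ⟨η₀ / ξ₀ ^ n, div_pos hη0 (pow_pos hξ1 n), ?_⟩
  intro h hh hdist
  have hpos : 0 < h := hh
  rw [Real.dist_eq, sub_zero, abs_of_pos hpos] at hdist
  have hhη : h < η₀ := lt_of_lt_of_le hdist (div_le_self hη0.le (one_le_pow₀ hξ₀.le))
  obtain ⟨m, hm1, hm2⟩ := exists_nat_pow_near ((one_le_div hpos).2 hhη.le) hξ₀
  have hlow : η₀ / ξ₀ ^ (m + 1) < h := by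
    rw [div_lt_iff₀ (pow_pos hξ1 _)]
    rw [div_lt_iff₀ hpos] at hm2
    linarith [hm2]
  have hhigh : h ≤ η₀ / ξ₀ ^ m := by
    rw [le_div_iff₀ (pow_pos hξ1 _)]
    rw [le_div_iff₀ hpos] at hm1
    linarith [hm1]
  have hfm := key m h hlow hhigh
  have hnm : n ≤ m := by
    by_contra hc
    push_neg at hc
    have h1 : ξ₀ ^ (m + 1) ≤ ξ₀ ^ n := pow_le_pow_right₀ hξ₀.le hc
    have h2 : η₀ / ξ₀ ^ n ≤ η₀ / ξ₀ ^ (m + 1) :=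
      div_le_div_of_nonneg_left hη0.le (pow_pos hξ1 _) h1
    linarith [lt_trans hlow hdist]
  have hmono : M / (ξ₀ ^ γ) ^ m ≤ M / (ξ₀ ^ γ) ^ n :=
    div_le_div_of_nonneg_left hMnn (pow_pos hrpos _) (pow_le_pow_right₀ hr1.le hnm)
  have hfin : M / (ξ₀ ^ γ) ^ n < ε := by
    rw [div_lt_iff₀ (pow_pos hrpos _)]
    rw [div_lt_iff₀ hε] at hn
    linarith [hn]
  have hfnn : 0 ≤ ω h / V h := div_nonneg (hωnn h hpos.le) (hVpos h hpos).le
  rw [Real.dist_eq, sub_zero, abs_of_nonneg hfnn]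
  exact lt_of_le_of_lt (le_trans hfm hmono) hfin
end

section
/- Let T : [0,1] → [0,1] be a piecewise two-to-one interval map with discontinuity c ∈ (0,1) such that: T(x) = x(1 + V(x)) on [0,c], where V : [0,∞) → [0,1) is continuous, increasing, and regularly varying at 0 with index σ > 0; lim_{x→c⁻} T(x) = 1 and lim_{x→c⁺} T(x) = 0; and there is λ > 1 with |T(x) − T(y)| ≥ λ|x − y| for all x, y ∈ (c,1]. Then there exist constants ρ_T > 0 and C₇ ∈ (0, min{ξ₀, η₀⁻¹} − 1] (for any fixed ξ₀ > 1, η₀ ∈ (0,1)) such that for all x, y ∈ [0,1] with |x − y| < ρ_T, one has |T(x) − T(y)| ≥ |x − y|·(1 + C₇ V(|x − y|)). -/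
open Set Filter Topology Real

theorem local_expansion_estimate
    (T V : ℝ → ℝ) (σ c lam : ℝ) (hσ : 0 < σ) (hc : c ∈ Ioo (0:ℝ) 1)
    (hTmaps : MapsTo T (Icc 0 1) (Icc 0 1))
    (hTleft : ∀ x ∈ Icc (0:ℝ) c, T x = x * (1 + V x))
    (hlim1 : Tendsto T (𝓝[<] c) (𝓝 1)) (hlim0 : Tendsto T (𝓝[>] c) (𝓝 0))
    (hlam : 1 < lam)
    (hexp : ∀ x ∈ Ioc c 1, ∀ y ∈ Ioc c 1, lam * |x - y| ≤ |T x - T y|)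
    (hVcont : ContinuousOn V (Ici 0)) (hVmono : StrictMonoOn V (Ici 0))
    (hVrange : ∀ x ∈ Ici (0:ℝ), 0 ≤ V x ∧ V x < 1) (hVpos : ∀ x > (0:ℝ), 0 < V x)
    (hVreg : RegVary0 V σ)
    (ξ₀ η₀ : ℝ) (hξ₀ : 1 < ξ₀) (hη₀ : η₀ ∈ Ioo (0:ℝ) 1) :
    ∃ ρT > (0:ℝ), ∃ C₇ : ℝ, 0 < C₇ ∧ C₇ ≤ min ξ₀ η₀⁻¹ - 1 ∧
      ∀ x ∈ Icc (0:ℝ) 1, ∀ y ∈ Icc (0:ℝ) 1, |x - y| < ρT →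
        |x - y| * (1 + C₇ * V |x - y|) ≤ |T x - T y| := by
  -- the function giving T on [0,c]
  set g : ℝ → ℝ := fun x => x * (1 + V x) with hg_def
  have hη₀inv : 1 < η₀⁻¹ := (one_lt_inv₀ hη₀.1).mpr hη₀.2
  -- the constant
  set C₇ : ℝ := min (min 1 (lam - 1)) (min ξ₀ η₀⁻¹ - 1) with hC₇def
  have hC₇pos : 0 < C₇ := by
    apply lt_min (lt_min one_pos (by linarith))
    rcases le_total ξ₀ η₀⁻¹ with h | h
    · rw [min_eq_left h]; linarith
    · rw [min_eq_right h]; linarith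
  have hC₇le1 : C₇ ≤ 1 := le_trans (min_le_left _ _) (min_le_left _ _)
  have hC₇lam : C₇ ≤ lam - 1 := le_trans (min_le_left _ _) (min_le_right _ _)
  -- continuity of g at c within Ici 0
  have hgcont : ContinuousWithinAt g (Ici 0) c := by
    exact (continuousWithinAt_id.mul (continuousWithinAt_const.add
      (hVcont c (le_of_lt hc.1))))
  -- g c = 1
  have hgc : g c = 1 := by
    have hIci : Ici (0:ℝ) ∈ 𝓝[<] c :=
      mem_nhdsWithin_of_mem_nhds (Ici_mem_nhds hc.1)
    have h1 : Tendsto g (𝓝[<] c) (𝓝 (g c)) :=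
      hgcont.mono_left (nhdsWithin_le_iff.mpr hIci)
    have heq : ∀ᶠ x in 𝓝[<] c, T x = g x := by
      filter_upwards [self_mem_nhdsWithin,
        mem_nhdsWithin_of_mem_nhds (Ici_mem_nhds hc.1)] with x hx1 hx2
      exact hTleft x ⟨hx2, le_of_lt hx1⟩
    have heq' : T =ᶠ[𝓝[<] c] g := heq
    have h2 : Tendsto T (𝓝[<] c) (𝓝 (g c)) := h1.congr' heq'.symm
    exact tendsto_nhds_unique h2 hlim1
  -- δ₀ from hlim0
  obtain ⟨δ₀, hδ₀pos, hδ₀⟩ := (Metric.tendsto_nhdsWithin_nhds.mp hlim0) (1/4) (by norm_num)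
  -- δ₁ from continuity of g at c
  obtain ⟨δ₁, hδ₁pos, hδ₁⟩ := (Metric.continuousWithinAt_iff.mp hgcont) (1/4) (by norm_num)
  refine ⟨min (min δ₀ δ₁) (1/4), by positivity, C₇, hC₇pos, min_le_right _ _, ?_⟩
  set ρT : ℝ := min (min δ₀ δ₁) (1/4) with hρT_def
  have hρδ₀ : ρT ≤ δ₀ := le_trans (min_le_left _ _) (min_le_left _ _)
  have hρδ₁ : ρT ≤ δ₁ := le_trans (min_le_left _ _) (min_le_right _ _)
  have hρ4 : ρT ≤ 1/4 := min_le_right _ _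
  have hVm := hVmono.monotoneOn
  -- key: the case x ≤ y
  have key : ∀ x ∈ Icc (0:ℝ) 1, ∀ y ∈ Icc (0:ℝ) 1, x ≤ y → |x - y| < ρT →
      |x - y| * (1 + C₇ * V |x - y|) ≤ |T x - T y| := by
    intro x hx y hy hxy hlt
    have habs : |x - y| = y - x := by
      rw [abs_sub_comm]; exact abs_of_nonneg (by linarith)
    rw [habs] at hlt ⊢
    have hd0 : (0:ℝ) ≤ y - x := by linarith
    have hVd := hVrange (y - x) hd0
    rcases le_or_gt y c with hyc | hcy
    · -- both in [0, c]
      have hxc : x ≤ c := le_trans hxy hyc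
      have hTx := hTleft x ⟨hx.1, hxc⟩
      have hTy := hTleft y ⟨hy.1, hyc⟩
      have hVxy : V x ≤ V y := hVm hx.1 hy.1 hxy
      have hVdy : V (y - x) ≤ V y := hVm hd0 hy.1 (by linarith [hx.1])
      have hstep : (y - x) * (1 + C₇ * V (y - x)) ≤ T y - T x := by
        rw [hTx, hTy]
        have h1 : C₇ * V (y - x) ≤ V y :=
          le_trans (by nlinarith [hVd.1]) hVdy
        nlinarith [mul_nonneg hx.1 (sub_nonneg.mpr hVxy),
          mul_le_mul_of_nonneg_left h1 hd0]
      calc (y - x) * (1 + C₇ * V (y - x)) ≤ T y - T x := hstep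
        _ ≤ |T y - T x| := le_abs_self _
        _ = |T x - T y| := abs_sub_comm _ _
    · rcases le_or_gt x c with hxc | hcx
      · -- mixed case : x ≤ c < y
        have hTx := hTleft x ⟨hx.1, hxc⟩
        have hgx : dist (g x) (g c) < 1/4 := by
          apply hδ₁ hx.1
          rw [Real.dist_eq, abs_of_nonpos (by linarith)]
          linarith
        have hgx' : 3/4 < g x := by
          rw [hgc] at hgx
          have := abs_lt.mp (by rwa [Real.dist_eq] at hgx)
          linarith [this.1]
        have hTy : dist (T y) 0 < 1/4 := by
          apply hδ₀ hcy
          rw [Real.dist_eq]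
          rw [abs_of_nonneg (by linarith)]
          linarith
        have hTy' : T y < 1/4 := by
          rw [Real.dist_eq, sub_zero] at hTy
          linarith [abs_lt.mp hTy |>.1, abs_lt.mp hTy |>.2]
        have hgx'' : 3/4 < x * (1 + V x) := hgx'
        have h12 : (1:ℝ)/2 ≤ T x - T y := by rw [hTx]; linarith
        have hCV1 : C₇ * V (y - x) ≤ 1 := by nlinarith [hVd.1, hVd.2]
        calc (y - x) * (1 + C₇ * V (y - x)) ≤ (y - x) * 2 := by
              apply mul_le_mul_of_nonneg_left (by linarith) hd0
          _ ≤ 1/2 := by linarith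
          _ ≤ T x - T y := h12
          _ ≤ |T x - T y| := le_abs_self _
      · -- both in (c, 1]
        have h := hexp x ⟨hcx, hx.2⟩ y ⟨hcy, hy.2⟩
        rw [habs] at h
        have hCV : C₇ * V (y - x) ≤ C₇ := by nlinarith [hVd.1, hVd.2]
        calc (y - x) * (1 + C₇ * V (y - x)) ≤ (y - x) * lam :=
              mul_le_mul_of_nonneg_left (by linarith) hd0
          _ = lam * (y - x) := mul_comm _ _
          _ ≤ |T x - T y| := h
  intro x hx y hy hlt
  rcases le_total x y with h | h
  · exact key x hx y hy h hlt
  · have := key y hy x hx h (by rwa [abs_sub_comm])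
    rw [abs_sub_comm y x, abs_sub_comm (T y)] at this
    exact this
end

section
/- Let T : [0,1] → [0,1] be a piecewise two-to-one interval map in the class 𝒥 (left branch x(1 + V(x)) on [0,c] with V continuous, increasing, regularly varying at 0 with index σ > 0; right branch uniformly expanding with factor λ > 1; lim_{x→c⁻}T(x)=1, lim_{x→c⁺}T(x)=0), let ω be a concave modulus satisfying Assumption A, and let Ω be the associated concave modulus of continuity (as in the appendix construction) for which the backward-orbit shadowing property with constants ρ_{T,ω} > 0 and C₈ > 0 holds. Let f ∈ C^ω([0,1]) and for k ≥ 1 define g_k(x) := sup{ S_k(f − m(f,T))(y) : T^k(y) = x }, where S_k φ = φ + φ∘T + … + φ∘T^{k−1}. Then there exists L = L(ρ_{T,ω}) > 0 such that for every k ≥ 1: (i) |g_k(x) − g_k(y)| ≤ L C₈⁻¹ |f|_ω Ω(|x − y|) for all x, y ∈ [0,1], and (ii) |g_k(x)| ≤ 2 L C₈⁻¹ |f|_ω Ω(1) for all x ∈ [0,1], where |f|_ω := sup_{x≠y} |f(x) − f(y)|/ω(|x − y|). -/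
open MeasureTheory Set Filter Topology Real

noncomputable section

/-- The seminorm `|f|_ω = sup_{x ≠ y} |f x - f y| / ω |x - y|` over `[0,1]`. -/
noncomputable def omegaSeminorm (ω f : ℝ → ℝ) : ℝ :=
  sSup {q : ℝ | ∃ x ∈ Set.Icc (0:ℝ) 1, ∃ y ∈ Set.Icc (0:ℝ) 1, x ≠ y ∧
    q = |f x - f y| / ω |x - y|}

/-- `g_k(x) = sup { S_k (f - m(f,T))(y) : y ∈ [0,1], T^k y = x }`. -/
noncomputable def gSup (T f : ℝ → ℝ) (k : ℕ) (x : ℝ) : ℝ :=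
  sSup {r : ℝ | ∃ y ∈ Set.Icc (0:ℝ) 1, T^[k] y = x ∧
    r = ∑ j ∈ Finset.range k, (f (T^[j] y) - ergMax T f)}

/-! Backward-orbit shadowing pairs every branch of preimages of `x` with a branch of preimages of
a nearby `y`, and the shadowing inequality bounds `∑ ω |x_j - y_j|` by `C₈⁻¹ Ω |x - y|`; hence
`g_k(x) - g_k(y) ≤ C₈⁻¹ |f|_ω Ω |x - y|` for `|x - y| < ρ_{T,ω}`, and chaining `N > ρ_{T,ω}⁻¹`
steps gives the modulus bound at every scale with `L = N`.

For the sup bound: `0` is a fixed point whose only preimage in `[0,1]` is `0`, and `δ₀` is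
invariant, so `g_k(0) = k (f 0 - m(f,T)) ≤ 0`. Conversely `g_k` is not uniformly `< -η`: since
`S_k (f - m(f,T)) ≤ g_k ∘ T^k`, integrating against invariant measures would give
`m(f,T) ≤ m(f,T) - η / k`. -/

section BackwardOrbit

variable {α : Type*} {T : α → α} {s : Set α}

theorem iterate_apply_of_backwardOrbit {X : ℕ → α} (hX : ∀ i, T (X (i + 1)) = X i)
    {n j : ℕ} (hj : j ≤ n) : T^[j] (X n) = X (n - j) := by
  induction j with
  | zero => rfl
  | succ j ih =>
    rw [Function.iterate_succ_apply', ih (by omega), show n - j = n - (j + 1) + 1 by omega, hX]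

theorem sum_range_iterate_of_backwardOrbit {M : Type*} [AddCommMonoid M] {X : ℕ → α}
    (hX : ∀ i, T (X (i + 1)) = X i) (g : α → M) (k : ℕ) :
    ∑ j ∈ Finset.range k, g (T^[j] (X k)) = ∑ i ∈ Finset.Icc 1 k, g (X i) := by
  refine Finset.sum_nbij' (k - ·) (k - ·) ?_ ?_ ?_ ?_ ?_ <;>
    intro j hj <;> simp only [Finset.mem_range, Finset.mem_Icc] at hj ⊢ <;> try omega
  rw [iterate_apply_of_backwardOrbit hX hj.le]

theorem Set.SurjOn.exists_backwardOrbit (hsurj : SurjOn T s s) (hmaps : MapsTo T s s)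
    {z : α} (hz : z ∈ s) (k : ℕ) :
    ∃ X : ℕ → α, (∀ i, X i ∈ s) ∧ (∀ i, T (X (i + 1)) = X i) ∧ X k = z := by
  have : Nonempty α := ⟨z⟩
  set S := Function.invFunOn T s
  refine ⟨fun i => T^[k - i] (S^[i - k] z), fun i => hmaps.iterate _ <|
    hsurj.mapsTo_invFunOn.iterate _ hz, fun i => ?_, by simp⟩
  dsimp only
  rcases lt_or_ge i k with hik | hik
  · rw [← Function.iterate_succ_apply' T, show i + 1 - k = i - k by omega,
      show (k - (i + 1)).succ = k - i by omega]
  · rw [show k - (i + 1) = 0 by omega, show k - i = 0 by omega, show i + 1 - k = i - k + 1 by omega,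
      Function.iterate_succ_apply', Function.iterate_zero_apply, Function.iterate_zero_apply]
    exact hsurj.rightInvOn_invFunOn (hsurj.mapsTo_invFunOn.iterate _ hz)

theorem eq_of_iterate_eq_of_forall_eq {a : α} (h : ∀ y ∈ s, T y = a → y = a)
    (hmaps : MapsTo T s s) (k : ℕ) {y : α} (hy : y ∈ s) (hk : T^[k] y = a) : y = a := by
  induction k generalizing y with
  | zero => exact hk
  | succ k ih => exact h y hy (ih (hmaps hy) hk)

end BackwardOrbit

theorem continuousOn_of_abs_sub_le_mul_modulus {ω f : ℝ → ℝ} {s : Set ℝ} {K : ℝ}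
    (hω : ContinuousWithinAt ω (Ici 0) 0) (hω0 : ω 0 = 0)
    (hf : ∀ x ∈ s, ∀ y ∈ s, |f x - f y| ≤ K * ω |x - y|) : ContinuousOn f s := by
  intro a ha
  have hdist : Tendsto (fun t => |t - a|) (𝓝[s] a) (𝓝[Ici 0] 0) :=
    tendsto_nhdsWithin_iff.2 ⟨by simpa using (((continuous_sub_right a).abs.tendsto a).mono_left
      nhdsWithin_le_nhds), Eventually.of_forall fun t => mem_Ici.2 (abs_nonneg _)⟩
  have hbound : Tendsto (fun t => K * ω |t - a|) (𝓝[s] a) (𝓝 0) := by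
    simpa [hω0] using ((hω.tendsto.comp hdist).const_mul K)
  refine tendsto_iff_dist_tendsto_zero.2 (squeeze_zero' (Eventually.of_forall fun _ => dist_nonneg)
    ?_ hbound)
  filter_upwards [self_mem_nhdsWithin] with t ht
  exact hf t ht a ha

theorem omegaSeminorm_nonneg {ω : ℝ → ℝ} (hω : ∀ x, 0 ≤ x → 0 ≤ ω x) (f : ℝ → ℝ) :
    0 ≤ omegaSeminorm ω f :=
  Real.sSup_nonneg <| by
    rintro q ⟨x, -, y, -, -, rfl⟩
    exact div_nonneg (abs_nonneg _) (hω _ (abs_nonneg _))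

theorem abs_sub_le_omegaSeminorm_mul {ω f : ℝ → ℝ} {C : ℝ} (hω : ∀ x, 0 ≤ x → 0 ≤ ω x)
    (hf : ∀ x ∈ Icc (0:ℝ) 1, ∀ y ∈ Icc (0:ℝ) 1, |f x - f y| ≤ C * ω |x - y|)
    {x y : ℝ} (hx : x ∈ Icc (0:ℝ) 1) (hy : y ∈ Icc (0:ℝ) 1) :
    |f x - f y| ≤ omegaSeminorm ω f * ω |x - y| := by
  rcases eq_or_ne x y with rfl | hxy
  · simpa using mul_nonneg (omegaSeminorm_nonneg hω f) (hω 0 le_rfl)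
  rcases (hω _ (abs_nonneg (x - y))).eq_or_lt with h0 | hpos
  · simpa [← h0] using hf x hx y hy
  have hbdd : BddAbove {q : ℝ | ∃ x ∈ Icc (0:ℝ) 1, ∃ y ∈ Icc (0:ℝ) 1, x ≠ y ∧
      q = |f x - f y| / ω |x - y|} := by
    refine ⟨max C 0, ?_⟩
    rintro q ⟨x, hx, y, hy, -, rfl⟩
    rcases (hω _ (abs_nonneg (x - y))).eq_or_lt with h0 | hpos
    · simp [← h0]
    · exact le_max_of_le_left ((div_le_iff₀ hpos).2 (hf x hx y hy))
  rw [← div_le_iff₀ hpos]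
  exact le_csSup hbdd ⟨x, hx, y, hy, hxy, rfl⟩

theorem abs_sub_le_of_sub_le_of_abs_sub_lt {s : Set ℝ} (hs : Convex ℝ s) {g Ω : ℝ → ℝ}
    {B ρ : ℝ} {N : ℕ} (hΩ : MonotoneOn Ω (Ici 0)) (hB : 0 ≤ B)
    (hN : ∀ x ∈ s, ∀ y ∈ s, |x - y| < N * ρ)
    (hg : ∀ x ∈ s, ∀ y ∈ s, |x - y| < ρ → g x - g y ≤ B * Ω |x - y|)
    {x y : ℝ} (hx : x ∈ s) (hy : y ∈ s) : |g x - g y| ≤ N * B * Ω |x - y| := by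
  have hN0 : (0:ℝ) < N :=
    Nat.cast_pos.2 (Nat.pos_of_ne_zero fun h => by simpa [h] using hN x hx x hx)
  set p : ℕ → ℝ := fun i => x + ((i:ℝ) / N) • (y - x)
  have hp_mem : ∀ i ≤ N, p i ∈ s := fun i hi =>
    hs.add_smul_sub_mem hx hy ⟨by positivity, div_le_one_of_le₀ (by exact_mod_cast hi) hN0.le⟩
  have hp_step : ∀ i, |p i - p (i + 1)| = |x - y| / N := fun i => by
    have : p i - p (i + 1) = (x - y) / N := by
      simp only [p, smul_eq_mul]
      field_simp
      push_cast
      ring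
    rw [this, abs_div, abs_of_pos hN0]
  have hstep_lt : |x - y| / N < ρ := (div_lt_iff₀' hN0).2 (hN x hx y hy)
  have hΩ_step : Ω (|x - y| / N) ≤ Ω |x - y| :=
    hΩ (mem_Ici.2 (div_nonneg (abs_nonneg _) hN0.le)) (mem_Ici.2 (abs_nonneg _))
      (div_le_self (abs_nonneg _) (by exact_mod_cast hN0))
  have h_one : ∀ i < N, |g (p i) - g (p (i + 1))| ≤ B * Ω |x - y| := fun i hi => by
    have hpi := hp_mem i hi.le
    have hpi' := hp_mem (i + 1) hi
    have hsymm := hp_step i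
    rw [abs_sub_comm] at hsymm
    rw [abs_sub_le_iff]
    constructor
    · refine (hg _ hpi _ hpi' (by rw [hp_step]; exact hstep_lt)).trans ?_
      rw [hp_step]; exact mul_le_mul_of_nonneg_left hΩ_step hB
    · refine (hg _ hpi' _ hpi (by rw [hsymm]; exact hstep_lt)).trans ?_
      rw [hsymm]; exact mul_le_mul_of_nonneg_left hΩ_step hB
  have hp0 : p 0 = x := by simp [p]
  have hpN : p N = y := by simp [p, hN0.ne']
  calc |g x - g y| = dist (g (p 0)) (g (p N)) := by rw [hp0, hpN, Real.dist_eq]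
    _ ≤ ∑ i ∈ Finset.range N, dist (g (p i)) (g (p (i + 1))) := dist_le_range_sum_dist (g ∘ p) N
    _ ≤ ∑ _i ∈ Finset.range N, B * Ω |x - y| :=
      Finset.sum_le_sum fun i hi => h_one i (Finset.mem_range.1 hi)
    _ = N * B * Ω |x - y| := by simp [mul_assoc]

section IntervalMap

variable {T V : ℝ → ℝ} {c : ℝ}

theorem continuousOn_of_eqOn_left_branch (hTleft : ∀ x ∈ Icc (0:ℝ) c, T x = x * (1 + V x))
    (hV : ContinuousOn V (Icc 0 c)) : ContinuousOn T (Icc 0 c) :=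
  (continuousOn_id.mul (continuousOn_const.add hV)).congr hTleft

theorem map_eq_one_of_left_branch (hc : 0 < c) (hTleft : ∀ x ∈ Icc (0:ℝ) c, T x = x * (1 + V x))
    (hV : ContinuousOn V (Icc 0 c)) (hlim : Tendsto T (𝓝[<] c) (𝓝 1)) : T c = 1 := by
  have hle : 𝓝[<] c ≤ 𝓝[Icc 0 c] c :=
    nhdsWithin_le_of_mem (mem_of_superset (Ioo_mem_nhdsLT hc) Ioo_subset_Icc_self)
  exact tendsto_nhds_unique
    ((continuousOn_of_eqOn_left_branch hTleft hV c ⟨hc.le, le_rfl⟩).tendsto.mono_left hle) hlim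

theorem surjOn_Icc_of_left_branch (hc : c ∈ Ioo (0:ℝ) 1)
    (hTleft : ∀ x ∈ Icc (0:ℝ) c, T x = x * (1 + V x)) (hV : ContinuousOn V (Icc 0 c))
    (hlim : Tendsto T (𝓝[<] c) (𝓝 1)) : SurjOn T (Icc 0 1) (Icc 0 1) := by
  intro w hw
  have hT0 : T 0 = 0 := by simpa using hTleft 0 ⟨le_rfl, hc.1.le⟩
  rw [← hT0, ← map_eq_one_of_left_branch hc.1 hTleft hV hlim] at hw
  obtain ⟨u, hu, rfl⟩ := intermediate_value_Icc hc.1.le (continuousOn_of_eqOn_left_branch hTleft hV) hw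
  exact ⟨u, ⟨hu.1, hu.2.trans hc.2.le⟩, rfl⟩

/-- The expansion estimate on the right branch passes to the limit `T (c⁺) = 0`. -/
theorem mul_sub_le_abs_of_expanding {b lam : ℝ} (hcb : c < b) (hlim : Tendsto T (𝓝[>] c) (𝓝 0))
    (hexp : ∀ x ∈ Ioc c b, ∀ y ∈ Ioc c b, lam * |x - y| ≤ |T x - T y|) {x : ℝ}
    (hx : x ∈ Ioc c b) : lam * (x - c) ≤ |T x| := by
  have hev : ∀ᶠ t in 𝓝[>] c, lam * |x - t| ≤ |T x - T t| := by
    filter_upwards [Ioo_mem_nhdsGT hcb] with t ht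
    exact hexp x hx t ⟨ht.1, ht.2.le⟩
  have hlhs : Tendsto (fun t => lam * |x - t|) (𝓝[>] c) (𝓝 (lam * |x - c|)) :=
    ((continuous_const.mul (continuous_const.sub continuous_id).abs).tendsto c).mono_left
      nhdsWithin_le_nhds
  have hrhs : Tendsto (fun t => |T x - T t|) (𝓝[>] c) (𝓝 |T x - 0|) :=
    (tendsto_const_nhds.sub hlim).abs
  simpa [abs_of_pos (sub_pos.2 hx.1)] using le_of_tendsto_of_tendsto hlhs hrhs hev

theorem eq_zero_of_map_eq_zero {lam : ℝ} (hc1 : c < 1)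
    (hTleft : ∀ x ∈ Icc (0:ℝ) c, T x = x * (1 + V x)) (hV : ∀ x ∈ Icc (0:ℝ) c, 0 ≤ V x)
    (hlam : 0 < lam) (hlim : Tendsto T (𝓝[>] c) (𝓝 0))
    (hexp : ∀ x ∈ Ioc c 1, ∀ y ∈ Ioc c 1, lam * |x - y| ≤ |T x - T y|)
    {y : ℝ} (hy : y ∈ Icc (0:ℝ) 1) (hTy : T y = 0) : y = 0 := by
  rcases le_or_gt y c with hyc | hyc
  · rw [hTleft y ⟨hy.1, hyc⟩] at hTy
    exact (mul_eq_zero.1 hTy).resolve_right (by linarith [hV y ⟨hy.1, hyc⟩])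
  · have := mul_sub_le_abs_of_expanding hc1 hlim hexp ⟨hyc, hy.2⟩
    rw [hTy, abs_zero] at this
    exact absurd this (not_le.2 (mul_pos hlam (sub_pos.2 hyc)))

end IntervalMap

namespace InvariantProb

variable {T f : ℝ → ℝ} {μ : Measure ℝ}

theorem ae_mem_Icc (hμ : InvariantProb T μ) : ∀ᵐ z ∂μ, z ∈ Icc (0:ℝ) 1 :=
  have := hμ.1
  ae_iff.2 ((prob_compl_eq_zero_iff measurableSet_Icc).2 hμ.2.1)

theorem aemeasurable (hμ : InvariantProb T μ) : AEMeasurable T μ := by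
  by_contra h
  have := hμ.1
  have hmap := hμ.2.2
  rw [Measure.map_of_not_aemeasurable h] at hmap
  exact IsProbabilityMeasure.ne_zero μ hmap.symm

theorem aemeasurable_iterate_and_map_iterate (hμ : InvariantProb T μ) (j : ℕ) :
    AEMeasurable T^[j] μ ∧ μ.map T^[j] = μ := by
  induction j with
  | zero => exact ⟨aemeasurable_id, Measure.map_id⟩
  | succ j ih =>
    have h : AEMeasurable T^[j] (μ.map T) := by rw [hμ.2.2]; exact ih.1
    rw [Function.iterate_succ]
    exact ⟨h.comp_aemeasurable hμ.aemeasurable,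
      by rw [← h.map_map_of_aemeasurable hμ.aemeasurable, hμ.2.2, ih.2]⟩

theorem integrable_of_continuousOn (hμ : InvariantProb T μ) (hf : ContinuousOn f (Icc 0 1)) :
    Integrable f μ := by
  have := hμ.1
  rw [← Measure.restrict_eq_self_of_ae_mem hμ.ae_mem_Icc]
  exact hf.integrableOn_compact isCompact_Icc

theorem integrable_comp_iterate (hμ : InvariantProb T μ) (hf : ContinuousOn f (Icc 0 1))
    (j : ℕ) : Integrable (fun z => f (T^[j] z)) μ := by
  obtain ⟨hj, hmap⟩ := hμ.aemeasurable_iterate_and_map_iterate j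
  have hint := hμ.integrable_of_continuousOn hf
  rw [← hmap] at hint
  exact (integrable_map_measure hint.1 hj).1 hint

theorem integral_comp_iterate (hμ : InvariantProb T μ) (hf : ContinuousOn f (Icc 0 1))
    (j : ℕ) : ∫ z, f (T^[j] z) ∂μ = ∫ z, f z ∂μ := by
  obtain ⟨hj, hmap⟩ := hμ.aemeasurable_iterate_and_map_iterate j
  have hint := hμ.integrable_of_continuousOn hf
  rw [← hmap] at hint
  rw [← integral_map hj hint.1, hmap]

theorem integral_le_of_sum_iterate_le (hμ : InvariantProb T μ) (hf : ContinuousOn f (Icc 0 1))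
    {k : ℕ} (hk : 0 < k) {a : ℝ}
    (h : ∀ z ∈ Icc (0:ℝ) 1, ∑ j ∈ Finset.range k, f (T^[j] z) ≤ k * a) :
    ∫ z, f z ∂μ ≤ a := by
  have := hμ.1
  refine le_of_mul_le_mul_left ?_ (Nat.cast_pos.2 hk)
  calc k * ∫ z, f z ∂μ = ∑ j ∈ Finset.range k, ∫ z, f (T^[j] z) ∂μ := by
        simp [hμ.integral_comp_iterate hf]
    _ = ∫ z, ∑ j ∈ Finset.range k, f (T^[j] z) ∂μ :=
        (integral_finsetSum _ fun j _ => hμ.integrable_comp_iterate hf j).symm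
    _ ≤ ∫ _z, k * a ∂μ :=
        integral_mono_ae (integrable_finsetSum _ fun j _ => hμ.integrable_comp_iterate hf j)
          (integrable_const _) (hμ.ae_mem_Icc.mono h)
    _ = k * a := by simp

theorem integral_le_ergMax (hμ : InvariantProb T μ) (hf : ContinuousOn f (Icc 0 1)) :
    ∫ z, f z ∂μ ≤ ergMax T f := by
  obtain ⟨M, hM⟩ := isCompact_Icc.bddAbove_image hf
  refine le_csSup ⟨M, ?_⟩ ⟨μ, hμ, rfl⟩
  rintro r ⟨ν, hν, rfl⟩
  exact hν.integral_le_of_sum_iterate_le hf one_pos fun z hz => by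
    simpa using hM (mem_image_of_mem f hz)

end InvariantProb

theorem invariantProb_dirac {T : ℝ → ℝ} {a : ℝ} (ha : a ∈ Icc (0:ℝ) 1) (hTa : T a = a) :
    InvariantProb T (Measure.dirac a) :=
  ⟨inferInstance, Measure.dirac_apply_of_mem ha, by rw [Measure.map_dirac, hTa]⟩

theorem ergMax_le_of_sum_iterate_le {T f : ℝ → ℝ} (hne : ∃ μ, InvariantProb T μ)
    (hf : ContinuousOn f (Icc 0 1)) {k : ℕ} (hk : 0 < k) {a : ℝ}
    (h : ∀ z ∈ Icc (0:ℝ) 1, ∑ j ∈ Finset.range k, f (T^[j] z) ≤ k * a) : ergMax T f ≤ a := by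
  obtain ⟨μ, hμ⟩ := hne
  refine csSup_le ⟨_, μ, hμ, rfl⟩ ?_
  rintro r ⟨ν, hν, rfl⟩
  exact hν.integral_le_of_sum_iterate_le hf hk h

section gSup

variable {T f : ℝ → ℝ} {k : ℕ}

theorem sum_le_gSup (hmaps : MapsTo T (Icc 0 1) (Icc 0 1)) (hf : BddAbove (f '' Icc 0 1))
    {y : ℝ} (hy : y ∈ Icc (0:ℝ) 1) :
    ∑ j ∈ Finset.range k, (f (T^[j] y) - ergMax T f) ≤ gSup T f k (T^[k] y) := by
  obtain ⟨M, hM⟩ := hf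
  refine le_csSup ⟨k * (M - ergMax T f), ?_⟩ ⟨y, hy, rfl, rfl⟩
  rintro r ⟨z, hz, -, rfl⟩
  calc ∑ j ∈ Finset.range k, (f (T^[j] z) - ergMax T f)
      ≤ ∑ _j ∈ Finset.range k, (M - ergMax T f) := Finset.sum_le_sum fun j _ =>
        sub_le_sub_right (hM (mem_image_of_mem f (hmaps.iterate j hz))) _
    _ = k * (M - ergMax T f) := by simp [mul_sub]

theorem gSup_le {x : ℝ} (hx : ∃ y ∈ Icc (0:ℝ) 1, T^[k] y = x) {a : ℝ}
    (h : ∀ y ∈ Icc (0:ℝ) 1, T^[k] y = x → ∑ j ∈ Finset.range k, (f (T^[j] y) - ergMax T f) ≤ a) :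
    gSup T f k x ≤ a := by
  obtain ⟨y, hy, hyx⟩ := hx
  refine csSup_le ⟨_, y, hy, hyx, rfl⟩ ?_
  rintro r ⟨z, hz, hzx, rfl⟩
  exact h z hz hzx

/-- The backward-orbit shadowing property, with constants `ρ = ρ_{T,ω}` and `C = C₈`. -/
def BackwardShadowing (T ω Ω : ℝ → ℝ) (ρ C : ℝ) : Prop :=
  ∀ x : ℕ → ℝ, (∀ k, x k ∈ Icc (0:ℝ) 1) → (∀ k, T (x (k + 1)) = x k) →
    ∀ y₀ ∈ Icc (0:ℝ) 1, |x 0 - y₀| < ρ →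
      ∃ y : ℕ → ℝ, y 0 = y₀ ∧ (∀ k, y k ∈ Icc (0:ℝ) 1) ∧ (∀ k, T (y (k + 1)) = y k) ∧
        ∀ k ≥ 1, Ω |x k - y k| + C * ∑ j ∈ Finset.Icc 1 k, ω |x j - y j| ≤ Ω |x 0 - y₀|

theorem gSup_sub_le_of_backwardShadowing {ω Ω : ℝ → ℝ} {ρ C K : ℝ}
    (hshadow : BackwardShadowing T ω Ω ρ C) (hC : 0 < C) (hΩ : ∀ x, 0 ≤ x → 0 ≤ Ω x)
    (hmaps : MapsTo T (Icc 0 1) (Icc 0 1)) (hsurj : SurjOn T (Icc 0 1) (Icc 0 1))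
    (hfbdd : BddAbove (f '' Icc 0 1)) (hK : 0 ≤ K)
    (hf : ∀ x ∈ Icc (0:ℝ) 1, ∀ y ∈ Icc (0:ℝ) 1, |f x - f y| ≤ K * ω |x - y|) (hk : 1 ≤ k)
    {x y : ℝ} (hx : x ∈ Icc (0:ℝ) 1) (hy : y ∈ Icc (0:ℝ) 1) (hxy : |x - y| < ρ) :
    gSup T f k x - gSup T f k y ≤ C⁻¹ * K * Ω |x - y| := by
  rw [sub_le_iff_le_add']
  refine gSup_le (hsurj.iterate k hx) fun z hz hzx => ?_
  obtain ⟨X, hXmem, hX, hXk⟩ := hsurj.exists_backwardOrbit hmaps hz k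
  have hX0 : X 0 = x := by rw [← hzx, ← hXk, iterate_apply_of_backwardOrbit hX le_rfl, Nat.sub_self]
  obtain ⟨Y, hY0, hYmem, hY, hXY⟩ := hshadow X hXmem hX y hy (hX0 ▸ hxy)
  have hYk : T^[k] (Y k) = y := by
    rw [iterate_apply_of_backwardOrbit hY le_rfl, Nat.sub_self, hY0]
  have hω_sum : ∑ i ∈ Finset.Icc 1 k, ω |X i - Y i| ≤ C⁻¹ * Ω |x - y| := by
    have := hXY k hk
    rw [hX0] at this
    rw [inv_mul_eq_div, le_div_iff₀' hC]
    linarith [hΩ _ (abs_nonneg (X k - Y k))]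
  have hsX := sum_range_iterate_of_backwardOrbit hX (fun t => f t - ergMax T f) k
  have hsY := sum_range_iterate_of_backwardOrbit hY (fun t => f t - ergMax T f) k
  calc ∑ j ∈ Finset.range k, (f (T^[j] z) - ergMax T f)
      = ∑ j ∈ Finset.range k, (f (T^[j] (Y k)) - ergMax T f) +
          ∑ i ∈ Finset.Icc 1 k, (f (X i) - f (Y i)) := by
        rw [← hXk, hsX, hsY, ← Finset.sum_add_distrib]
        exact Finset.sum_congr rfl fun i _ => by ring
    _ ≤ gSup T f k y + K * ∑ i ∈ Finset.Icc 1 k, ω |X i - Y i| := by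
        rw [Finset.mul_sum]
        exact add_le_add (hYk ▸ sum_le_gSup hmaps hfbdd (hYmem k)) <| Finset.sum_le_sum fun i _ =>
          (le_abs_self _).trans (hf _ (hXmem i) _ (hYmem i))
    _ ≤ gSup T f k y + C⁻¹ * K * Ω |x - y| := by
        linarith [mul_le_mul_of_nonneg_left hω_sum hK]

theorem gSup_zero_nonpos (hmaps : MapsTo T (Icc 0 1) (Icc 0 1)) (hT0 : T 0 = 0)
    (hzero : ∀ y ∈ Icc (0:ℝ) 1, T y = 0 → y = 0) (hf : ContinuousOn f (Icc 0 1)) (k : ℕ) :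
    gSup T f k 0 ≤ 0 := by
  have h0 : (0:ℝ) ∈ Icc (0:ℝ) 1 := ⟨le_rfl, zero_le_one⟩
  have hf0 : f 0 ≤ ergMax T f := by
    simpa using (invariantProb_dirac h0 hT0).integral_le_ergMax hf
  refine gSup_le ⟨0, h0, Function.iterate_fixed hT0 k⟩ fun y hy hyk => ?_
  obtain rfl := eq_of_iterate_eq_of_forall_eq hzero hmaps k hy hyk
  simpa [Function.iterate_fixed hT0] using mul_le_mul_of_nonneg_left hf0 (Nat.cast_nonneg k)

theorem exists_neg_le_gSup (hmaps : MapsTo T (Icc 0 1) (Icc 0 1)) (hT0 : T 0 = 0)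
    (hf : ContinuousOn f (Icc 0 1)) (hk : 0 < k) {η : ℝ} (hη : 0 < η) :
    ∃ x ∈ Icc (0:ℝ) 1, -η ≤ gSup T f k x := by
  by_contra! h
  have hkpos : (0:ℝ) < k := Nat.cast_pos.2 hk
  have hm : ergMax T f ≤ ergMax T f - η / k := by
    refine ergMax_le_of_sum_iterate_le ⟨_, invariantProb_dirac ⟨le_rfl, zero_le_one⟩ hT0⟩ hf hk
      fun z hz => ?_
    have hsum := (sum_le_gSup hmaps (isCompact_Icc.bddAbove_image hf) hz).trans
      (h _ (hmaps.iterate k hz)).le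
    rw [Finset.sum_sub_distrib] at hsum
    simp only [Finset.sum_const, Finset.card_range, nsmul_eq_mul] at hsum
    rw [mul_sub, mul_div_cancel₀ _ hkpos.ne']
    linarith
  linarith [div_pos hη hkpos]

end gSup

theorem abs_le_mul_of_abs_sub_le_mul {g Ω : ℝ → ℝ} {A : ℝ} (hΩ : MonotoneOn Ω (Ici 0))
    (hA : 0 ≤ A) (hg : ∀ x ∈ Icc (0:ℝ) 1, ∀ y ∈ Icc (0:ℝ) 1, |g x - g y| ≤ A * Ω |x - y|)
    (hg0 : g 0 ≤ 0) (hsup : ∀ η > 0, ∃ x ∈ Icc (0:ℝ) 1, -η ≤ g x)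
    {x : ℝ} (hx : x ∈ Icc (0:ℝ) 1) : |g x| ≤ A * Ω 1 := by
  have hΩ1 : ∀ y ∈ Icc (0:ℝ) 1, A * Ω |x - y| ≤ A * Ω 1 := fun y hy =>
    mul_le_mul_of_nonneg_left (hΩ (mem_Ici.2 (abs_nonneg _)) (mem_Ici.2 zero_le_one)
      (abs_sub_le_of_nonneg_of_le hx.1 hx.2 hy.1 hy.2)) hA
  refine abs_le.2 ⟨le_of_forall_pos_le_add fun η hη => ?_, ?_⟩
  · obtain ⟨y, hy, hgy⟩ := hsup η hη
    linarith [(abs_le.1 (hg x hx y hy)).1, hΩ1 y hy]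
  · linarith [(abs_le.1 (hg x hx 0 ⟨le_rfl, zero_le_one⟩)).2, hΩ1 0 ⟨le_rfl, zero_le_one⟩]

theorem gSup_equicontinuous_and_bounded_general
    (T V ω Ω : ℝ → ℝ) (c lam ρTω C₈ : ℝ)
    (hc : c ∈ Ioo (0:ℝ) 1)
    (hTmaps : MapsTo T (Icc 0 1) (Icc 0 1))
    (hTleft : ∀ x ∈ Icc (0:ℝ) c, T x = x * (1 + V x))
    (hlim1 : Tendsto T (𝓝[<] c) (𝓝 1)) (hlim0 : Tendsto T (𝓝[>] c) (𝓝 0))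
    (hlam : 1 < lam)
    (hexp : ∀ x ∈ Ioc c 1, ∀ y ∈ Ioc c 1, lam * |x - y| ≤ |T x - T y|)
    (hVcont : ContinuousOn V (Ici 0))
    (hVrange : ∀ x ∈ Ici (0:ℝ), 0 ≤ V x ∧ V x < 1)
    (hωmod : ConcaveModulus ω)
    (hΩmod : ConcaveModulus Ω)
    (hρTω : 0 < ρTω) (hC₈ : 0 < C₈)
    (hshadow : ∀ x : ℕ → ℝ, (∀ k, x k ∈ Icc (0:ℝ) 1) → (∀ k, T (x (k + 1)) = x k) →
      ∀ y₀ ∈ Icc (0:ℝ) 1, |x 0 - y₀| < ρTω →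
        ∃ y : ℕ → ℝ, y 0 = y₀ ∧ (∀ k, y k ∈ Icc (0:ℝ) 1) ∧
          (∀ k, T (y (k + 1)) = y k) ∧
          ∀ k ≥ 1, Ω |x k - y k| + C₈ * ∑ j ∈ Finset.Icc 1 k, ω |x j - y j| ≤
            Ω |x 0 - y₀|)
    (f : ℝ → ℝ)
    (hf : ∃ C > (0:ℝ), ∀ x ∈ Icc (0:ℝ) 1, ∀ y ∈ Icc (0:ℝ) 1, |f x - f y| ≤ C * ω |x - y|) :
    ∃ L > (0:ℝ), ∀ k : ℕ, 1 ≤ k →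
      (∀ x ∈ Icc (0:ℝ) 1, ∀ y ∈ Icc (0:ℝ) 1,
        |gSup T f k x - gSup T f k y| ≤ L * C₈⁻¹ * omegaSeminorm ω f * Ω |x - y|) ∧
      (∀ x ∈ Icc (0:ℝ) 1, |gSup T f k x| ≤ 2 * L * C₈⁻¹ * omegaSeminorm ω f * Ω 1) := by
  obtain ⟨hωcont, -, hω0, hωnn, -⟩ := hωmod
  obtain ⟨-, hΩmono, -, hΩnn, -⟩ := hΩmod
  obtain ⟨C, -, hfC⟩ := hf
  set K := omegaSeminorm ω f
  have hK : 0 ≤ K := omegaSeminorm_nonneg hωnn f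
  have hfK : ∀ x ∈ Icc (0:ℝ) 1, ∀ y ∈ Icc (0:ℝ) 1, |f x - f y| ≤ K * ω |x - y| :=
    fun x hx y hy => abs_sub_le_omegaSeminorm_mul hωnn hfC hx hy
  have hfcont : ContinuousOn f (Icc 0 1) :=
    continuousOn_of_abs_sub_le_mul_modulus (hωcont 0 self_mem_Ici) hω0 hfK
  have hT0 : T 0 = 0 := by simpa using hTleft 0 ⟨le_rfl, hc.1.le⟩
  have hsurj := surjOn_Icc_of_left_branch hc hTleft (hVcont.mono Icc_subset_Ici_self) hlim1
  have hzero : ∀ y ∈ Icc (0:ℝ) 1, T y = 0 → y = 0 := fun y =>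
    eq_zero_of_map_eq_zero hc.2 hTleft (fun x hx => (hVrange x hx.1).1) (by linarith) hlim0 hexp
  obtain ⟨N, hN⟩ := exists_nat_gt ρTω⁻¹
  have hNρ : 1 < N * ρTω := by rwa [inv_lt_iff_one_lt_mul₀ hρTω] at hN
  have hB : 0 ≤ C₈⁻¹ * K := mul_nonneg (inv_nonneg.2 hC₈.le) hK
  refine ⟨N, (inv_pos.2 hρTω).trans hN, fun k hk => ?_⟩
  have hlip : ∀ x ∈ Icc (0:ℝ) 1, ∀ y ∈ Icc (0:ℝ) 1,
      |gSup T f k x - gSup T f k y| ≤ N * C₈⁻¹ * K * Ω |x - y| := fun x hx y hy => by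
    rw [mul_assoc (N:ℝ)]
    refine abs_sub_le_of_sub_le_of_abs_sub_lt (convex_Icc 0 1) hΩmono hB
      (fun u hu v hv => (abs_sub_le_of_nonneg_of_le hu.1 hu.2 hv.1 hv.2).trans_lt hNρ)
      (fun u hu v hv => gSup_sub_le_of_backwardShadowing hshadow hC₈ hΩnn hTmaps hsurj
        (isCompact_Icc.bddAbove_image hfcont) hK hfK hk hu hv) hx hy
  refine ⟨hlip, fun x hx => ?_⟩
  have hbound := abs_le_mul_of_abs_sub_le_mul hΩmono (by positivity) hlip
    (gSup_zero_nonpos hTmaps hT0 hzero hfcont k)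
    (fun η hη => exists_neg_le_gSup hTmaps hT0 hfcont hk hη) hx
  linarith [mul_nonneg (mul_nonneg hB (Nat.cast_nonneg N)) (hΩnn 1 zero_le_one)]

theorem gSup_equicontinuous_and_bounded
    (T V ω Ω : ℝ → ℝ) (σ c lam ρTω C₈ : ℝ)
    (hσ : 0 < σ) (hc : c ∈ Ioo (0:ℝ) 1)
    (hTmaps : MapsTo T (Icc 0 1) (Icc 0 1))
    (hTleft : ∀ x ∈ Icc (0:ℝ) c, T x = x * (1 + V x))
    (hlim1 : Tendsto T (𝓝[<] c) (𝓝 1)) (hlim0 : Tendsto T (𝓝[>] c) (𝓝 0))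
    (hlam : 1 < lam)
    (hexp : ∀ x ∈ Ioc c 1, ∀ y ∈ Ioc c 1, lam * |x - y| ≤ |T x - T y|)
    (hVcont : ContinuousOn V (Ici 0)) (hVmono : StrictMonoOn V (Ici 0))
    (hVrange : ∀ x ∈ Ici (0:ℝ), 0 ≤ V x ∧ V x < 1) (hVpos : ∀ x > (0:ℝ), 0 < V x)
    (hVreg : RegVary0 V σ)
    (hωmod : ConcaveModulus ω)
    (hA : ∃ γ > (0:ℝ), ∃ ξ₀ > (1:ℝ), ∃ η₀ ∈ Ioo (0:ℝ) 1,
      ∀ h ∈ Ioo (0:ℝ) η₀, ∀ ξ ∈ Ioc (1:ℝ) ξ₀,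
        ξ ^ γ * (ω h / V h) ≤ ω (ξ * h) / V (ξ * h))
    (hΩmod : ConcaveModulus Ω)
    (hρTω : 0 < ρTω) (hC₈ : 0 < C₈)
    (hshadow : ∀ x : ℕ → ℝ, (∀ k, x k ∈ Icc (0:ℝ) 1) → (∀ k, T (x (k + 1)) = x k) →
      ∀ y₀ ∈ Icc (0:ℝ) 1, |x 0 - y₀| < ρTω →
        ∃ y : ℕ → ℝ, y 0 = y₀ ∧ (∀ k, y k ∈ Icc (0:ℝ) 1) ∧
          (∀ k, T (y (k + 1)) = y k) ∧
          ∀ k ≥ 1, Ω |x k - y k| + C₈ * ∑ j ∈ Finset.Icc 1 k, ω |x j - y j| ≤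
            Ω |x 0 - y₀|)
    (f : ℝ → ℝ)
    (hf : ∃ C > (0:ℝ), ∀ x ∈ Icc (0:ℝ) 1, ∀ y ∈ Icc (0:ℝ) 1, |f x - f y| ≤ C * ω |x - y|) :
    ∃ L > (0:ℝ), ∀ k : ℕ, 1 ≤ k →
      (∀ x ∈ Icc (0:ℝ) 1, ∀ y ∈ Icc (0:ℝ) 1,
        |gSup T f k x - gSup T f k y| ≤ L * C₈⁻¹ * omegaSeminorm ω f * Ω |x - y|) ∧
      (∀ x ∈ Icc (0:ℝ) 1, |gSup T f k x| ≤ 2 * L * C₈⁻¹ * omegaSeminorm ω f * Ω 1) :=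
  gSup_equicontinuous_and_bounded_general T V ω Ω c lam ρTω C₈ hc hTmaps hTleft hlim1 hlim0 hlam
    hexp hVcont hVrange hωmod hΩmod hρTω hC₈ hshadow f hf

end
end
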